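/- arXiv:2012.02835 — 9 statements merged into one kernel-verified Lean document; each statement's English description precedes it below -/
import Mathlib

section
/- Under hypotheses (H), setting X_∞ := ∩_{n=−∞}^{+∞} Φ^{−n}(H), there exists a nonempty compact set X with X ⊆ X_∞ ⊆ H such that Φ(X) = X and Φ restricted to X is semi-conjugate to the two-sided Bernoulli shift on two symbols: there exists a continuous surjection π: X → Σ₂ with π ∘ Φ = σ ∘ π on X. -/
open Set

noncomputable section

/-- The unit square `[0,1]²` in `ℝ²`. -/
def unitSq : Set (ℝ × ℝ) := Icc (0:ℝ) 1 ×ˢ Icc (0:ℝ) 1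

/-- A generalized (oriented) rectangle: the image of the unit square under a map that is a
homeomorphism onto its image (continuous and injective on the compact unit square). -/
structure OrientedRectangle where
  h : ℝ × ℝ → ℝ × ℝ
  cont : ContinuousOn h unitSq
  inj : InjOn h unitSq

/-- The carrier set of an oriented rectangle. -/
def OrientedRectangle.carrier (R : OrientedRectangle) : Set (ℝ × ℝ) := R.h '' unitSq

/-- The left side `h({0} × [0,1])`. -/
def OrientedRectangle.left (R : OrientedRectangle) : Set (ℝ × ℝ) :=
  R.h '' (({0} : Set ℝ) ×ˢ Icc (0:ℝ) 1)

/-- The right side `h({1} × [0,1])`. -/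
def OrientedRectangle.right (R : OrientedRectangle) : Set (ℝ × ℝ) :=
  R.h '' (({1} : Set ℝ) ×ˢ Icc (0:ℝ) 1)

/-- `(K, F)` stretches the oriented rectangle `A` to `B` along the paths. -/
def StretchesTo (K : Set (ℝ × ℝ)) (F : ℝ × ℝ → ℝ × ℝ) (A B : OrientedRectangle) : Prop :=
  IsCompact K ∧ K ⊆ A.carrier ∧ ContinuousOn F K ∧
  ∀ γ : ℝ → ℝ × ℝ, ContinuousOn γ (Icc 0 1) → MapsTo γ (Icc (0:ℝ) 1) A.carrier →
    ((γ 0 ∈ A.left ∧ γ 1 ∈ A.right) ∨ (γ 0 ∈ A.right ∧ γ 1 ∈ A.left)) →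
    ∃ t' t'' : ℝ, t' ∈ Icc (0:ℝ) 1 ∧ t'' ∈ Icc (0:ℝ) 1 ∧ t' ≤ t'' ∧
      (∀ t ∈ Icc t' t'', γ t ∈ K) ∧
      (∀ t ∈ Icc t' t'', F (γ t) ∈ B.carrier) ∧
      ((F (γ t') ∈ B.left ∧ F (γ t'') ∈ B.right) ∨
       (F (γ t') ∈ B.right ∧ F (γ t'') ∈ B.left))

/-- The Bernoulli shift on two-sided sequences of two symbols. -/
def bshift (s : ℤ → Fin 2) : ℤ → Fin 2 := fun i => s (i + 1)

/-- crossing predicate -/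
def Crossing (A : OrientedRectangle) (p q : ℝ × ℝ) : Prop :=
  (p ∈ A.left ∧ q ∈ A.right) ∨ (p ∈ A.right ∧ q ∈ A.left)

lemma left_right_disjoint (R : OrientedRectangle) {p : ℝ × ℝ}
    (hl : p ∈ R.left) (hr : p ∈ R.right) : False := by
  obtain ⟨u, ⟨hu1, hu2⟩, hup⟩ := hl
  obtain ⟨v, ⟨hv1, hv2⟩, hvp⟩ := hr
  simp only [mem_singleton_iff] at hu1 hv1
  have hu : u ∈ unitSq := ⟨by rw [hu1]; exact ⟨le_refl 0, zero_le_one⟩, hu2⟩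
  have hv : v ∈ unitSq := ⟨by rw [hv1]; exact ⟨zero_le_one, le_refl 1⟩, hv2⟩
  have h := R.inj hu hv (hup.trans hvp.symm)
  rw [← h, hu1] at hv1
  exact one_ne_zero hv1.symm

lemma crossing_ne (A : OrientedRectangle) {p q : ℝ × ℝ} (h : Crossing A p q) : p ≠ q := by
  rintro rfl
  rcases h with ⟨h1, h2⟩ | ⟨h1, h2⟩
  · exact left_right_disjoint A h1 h2
  · exact left_right_disjoint A h2 h1

lemma stretch_on_interval {K : Set (ℝ × ℝ)} {f : ℝ × ℝ → ℝ × ℝ} {A B : OrientedRectangle}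
    (h : StretchesTo K f A B) {γ : ℝ → ℝ × ℝ} {a b : ℝ}
    (hab : a < b) (hγc : ContinuousOn γ (Icc a b)) (hγm : MapsTo γ (Icc a b) A.carrier)
    (hcr : Crossing A (γ a) (γ b)) :
    ∃ a' b', a ≤ a' ∧ a' < b' ∧ b' ≤ b ∧
      (∀ t ∈ Icc a' b', γ t ∈ K ∧ f (γ t) ∈ B.carrier) ∧
      Crossing B (f (γ a')) (f (γ b')) := by
  have hba : (0:ℝ) < b - a := by linarith
  set φ : ℝ → ℝ := fun u => a + u * (b - a) with hφ
  have hφc : Continuous φ := by fun_prop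
  have hφm : MapsTo φ (Icc 0 1) (Icc a b) := by
    intro u hu
    simp only [hφ, mem_Icc]
    constructor
    · nlinarith [hu.1, hu.2]
    · nlinarith [hu.1, hu.2]
  have hφ0 : φ 0 = a := by simp [hφ]
  have hφ1 : φ 1 = b := by simp [hφ]
  obtain ⟨t', t'', ht'1, ht''1, hle, hK, hBc, hcr'⟩ :=
    h.2.2.2 (γ ∘ φ) (hγc.comp hφc.continuousOn hφm) (hγm.comp hφm)
      (by simpa [Crossing, Function.comp, hφ0, hφ1] using hcr)
  have hne : t' ≠ t'' := by
    intro hEq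
    apply crossing_ne B (p := f ((γ ∘ φ) t')) (q := f ((γ ∘ φ) t'')) hcr'
    rw [hEq]
  have hlt : t' < t'' := lt_of_le_of_ne hle hne
  refine ⟨φ t', φ t'', ?_, ?_, ?_, ?_, ?_⟩
  · simp only [hφ]; nlinarith [ht'1.1]
  · simp only [hφ]; nlinarith [mul_pos (by linarith : (0:ℝ) < t'' - t') hba]
  · simp only [hφ]; nlinarith [ht''1.2]
  · intro t ht
    have hu1 : (t - a) / (b - a) ∈ Icc t' t'' := by
      constructor
      · rw [le_div_iff₀ hba]; have := ht.1; simp only [hφ] at this; linarith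
      · rw [div_le_iff₀ hba]; have := ht.2; simp only [hφ] at this; linarith
    have hφu : φ ((t - a) / (b - a)) = t := by
      simp only [hφ]; field_simp; ring
    have h1 := hK _ hu1
    have h2 := hBc _ hu1
    simp only [Function.comp_apply, hφu] at h1 h2
    exact ⟨h1, h2⟩
  · exact hcr'

/-- nested intervals selection -/
lemma exists_point_in_nested {P : ℕ → ℝ → ℝ → Prop} (base : P 0 0 1)
    (step : ∀ m a b, P m a b → ∃ a' b', a ≤ a' ∧ a' ≤ b' ∧ b' ≤ b ∧ P (m+1) a' b') :
    ∃ t : ℝ, ∀ m, ∃ a b, P m a b ∧ a ≤ t ∧ t ≤ b := by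
  choose f g h1 h2 h3 h4 using step
  let seq : (m : ℕ) → (Σ' a : ℝ, Σ' b : ℝ, P m a b) := fun m =>
    Nat.rec ⟨0, 1, base⟩ (fun m ih => ⟨f m ih.1 ih.2.1 ih.2.2, g m ih.1 ih.2.1 ih.2.2,
      h4 m ih.1 ih.2.1 ih.2.2⟩) m
  set a : ℕ → ℝ := fun m => (seq m).1 with ha
  set b : ℕ → ℝ := fun m => (seq m).2.1 with hb
  have hP : ∀ m, P m (a m) (b m) := fun m => (seq m).2.2
  have hstep1 : ∀ m, a m ≤ a (m+1) := fun m => h1 m (a m) (b m) (hP m)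
  have hstep2 : ∀ m, a (m+1) ≤ b (m+1) := fun m => h2 m (a m) (b m) (hP m)
  have hstep3 : ∀ m, b (m+1) ≤ b m := fun m => h3 m (a m) (b m) (hP m)
  have hab : ∀ m, a m ≤ b m := by
    intro m; cases m with
    | zero => exact zero_le_one
    | succ n => exact hstep2 n
  have hamono : Monotone a := monotone_nat_of_le_succ hstep1
  have hbmono : Antitone b := antitone_nat_of_succ_le hstep3
  have hkey : ∀ m n, a m ≤ b n := by
    intro m n
    rcases le_total m n with h | h
    · exact (hamono h).trans (hab n)
    · exact (hab m).trans (hbmono h)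
  have hbdd : BddAbove (range a) := ⟨b 0, by rintro _ ⟨m, rfl⟩; exact hkey m 0⟩
  refine ⟨⨆ m, a m, fun m => ⟨a m, b m, hP m, le_ciSup hbdd m, ciSup_le fun n => hkey n m⟩⟩

lemma phi_step {F G : ℝ × ℝ → ℝ × ℝ} {A B : OrientedRectangle} {Hs : Set (ℝ × ℝ)}
    (hCFs : StretchesTo Hs F A B) (hCG : StretchesTo B.carrier G B A)
    {γ : ℝ → ℝ × ℝ} {a b : ℝ} (hab : a < b) (hc : ContinuousOn γ (Icc a b))
    (hm : MapsTo γ (Icc a b) A.carrier) (hcr : Crossing A (γ a) (γ b)) :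
    ∃ a' b', a ≤ a' ∧ a' < b' ∧ b' ≤ b ∧
      (∀ t ∈ Icc a' b', γ t ∈ Hs ∧ F (γ t) ∈ B.carrier ∧ G (F (γ t)) ∈ A.carrier) ∧
      Crossing A (G (F (γ a'))) (G (F (γ b'))) := by
  obtain ⟨a1, b1, h1, h2, h3, h4, h5⟩ := stretch_on_interval hCFs hab hc hm hcr
  have hsub : Icc a1 b1 ⊆ Icc a b := Icc_subset_Icc h1 h3
  have hFc : ContinuousOn (fun t => F (γ t)) (Icc a1 b1) :=
    hCFs.2.2.1.comp (hc.mono hsub) (fun t ht => (h4 t ht).1)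
  have hFm : MapsTo (fun t => F (γ t)) (Icc a1 b1) B.carrier := fun t ht => (h4 t ht).2
  obtain ⟨a2, b2, g1, g2, g3, g4, g5⟩ := stretch_on_interval hCG h2 hFc hFm h5
  refine ⟨a2, b2, h1.trans g1, g2, g3.trans h3, ?_, g5⟩
  intro t ht
  have ht1 : t ∈ Icc a1 b1 := Icc_subset_Icc g1 g3 ht
  exact ⟨(h4 t ht1).1, (h4 t ht1).2, (g4 t ht).2⟩



/-- Under hypotheses (H), with `X_∞ = ⋂_{n∈ℤ} Φ^{-n}(H)` (the set of points admitting a full orbit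
in `H`), there is a nonempty compact set `X ⊆ X_∞ ⊆ H` with `Φ(X) = X` on which `Φ` is
semi-conjugate to the two-sided Bernoulli shift on two symbols. -/
theorem statement0
    (F G : ℝ × ℝ → ℝ × ℝ) (DF DG : Set (ℝ × ℝ))
    (A B : OrientedRectangle)
    (H0 H1 : Set (ℝ × ℝ))
    (hdisj : Disjoint H0 H1)
    (hH0 : H0 ⊆ A.carrier ∩ DF) (hH1 : H1 ⊆ A.carrier ∩ DF)
    (hCF0 : StretchesTo H0 F A B) (hCF1 : StretchesTo H1 F A B)
    (hBDG : B.carrier ⊆ DG)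
    (hCG : StretchesTo B.carrier G B A)
    (Φ : ℝ × ℝ → ℝ × ℝ) (hΦ : Φ = G ∘ F)
    (Hset : Set (ℝ × ℝ)) (hHset : Hset = (H0 ∪ H1) ∩ F ⁻¹' B.carrier)
    (hcont : ContinuousOn Φ Hset) (hinj : InjOn Φ Hset)
    (Xinf : Set (ℝ × ℝ))
    (hXinf : Xinf = {x | ∃ o : ℤ → ℝ × ℝ, o 0 = x ∧ (∀ k, Φ (o k) = o (k + 1)) ∧
      ∀ k, o k ∈ Hset}) :
    ∃ X : Set (ℝ × ℝ), X.Nonempty ∧ IsCompact X ∧ X ⊆ Xinf ∧ Xinf ⊆ Hset ∧ Φ '' X = X ∧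
      ∃ π : ℝ × ℝ → (ℤ → Fin 2), ContinuousOn π X ∧ π '' X = univ ∧
        ∀ x ∈ X, π (Φ x) = bshift (π x) := by
  classical
  have hΦap : ∀ p, Φ p = G (F p) := fun p => by rw [hΦ]; rfl
  have hH0c : IsCompact H0 := hCF0.1
  have hH1c : IsCompact H1 := hCF1.1
  have hUc : IsCompact unitSq := IsCompact.prod isCompact_Icc isCompact_Icc
  have hBcc : IsCompact B.carrier := hUc.image_of_continuousOn B.cont
  have hK0 : IsCompact (H0 ∩ F ⁻¹' B.carrier) :=
    hH0c.of_isClosed_subset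
      (hCF0.2.2.1.preimage_isClosed_of_isClosed hH0c.isClosed hBcc.isClosed) inter_subset_left
  have hK1 : IsCompact (H1 ∩ F ⁻¹' B.carrier) :=
    hH1c.of_isClosed_subset
      (hCF1.2.2.1.preimage_isClosed_of_isClosed hH1c.isClosed hBcc.isClosed) inter_subset_left
  have hHsetc : IsCompact Hset := by
    rw [hHset, union_inter_distrib_right]
    exact hK0.union hK1
  -- symbols
  set Hsym : Fin 2 → Set (ℝ × ℝ) := fun i => if i = 0 then H0 else H1 with hHsym
  have hCFsym : ∀ i, StretchesTo (Hsym i) F A B := by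
    intro i; fin_cases i <;> simp [hHsym, hCF0, hCF1]
  have hHsymsub : ∀ i, Hsym i ⊆ H0 ∪ H1 := by
    intro i; fin_cases i <;> simp [hHsym]
  have hHsymC : ∀ i, IsCompact (Hsym i) := by
    intro i; fin_cases i <;> simp [hHsym, hH0c, hH1c]
  have hHsym0 : Hsym 0 = H0 := by simp [hHsym]
  have hHsym1 : Hsym 1 = H1 := by simp [hHsym]
  -- base path
  set γ0 : ℝ → ℝ × ℝ := fun t => A.h (t, 0) with hγ0
  have hγ0in : MapsTo (fun t : ℝ => ((t, 0) : ℝ × ℝ)) (Icc 0 1) unitSq :=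
    fun t ht => ⟨ht, left_mem_Icc.2 zero_le_one⟩
  have hγ0c : ContinuousOn γ0 (Icc 0 1) := A.cont.comp (by fun_prop) hγ0in
  have hγ0A : MapsTo γ0 (Icc 0 1) A.carrier := fun t ht => ⟨(t, 0), hγ0in ht, rfl⟩
  have hγ0cr : Crossing A (γ0 0) (γ0 1) := by
    refine Or.inl ⟨⟨(0, 0), ⟨rfl, left_mem_Icc.2 zero_le_one⟩, rfl⟩,
      ⟨(1, 0), ⟨rfl, left_mem_Icc.2 zero_le_one⟩, rfl⟩⟩
  -- forward itineraries
  have hforward : ∀ s' : ℕ → Fin 2, ∃ x : ℝ × ℝ,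
      ∀ k : ℕ, Φ^[k] x ∈ Hsym (s' k) ∧ F (Φ^[k] x) ∈ B.carrier := by
    intro s'
    set P : ℕ → ℝ → ℝ → Prop := fun m a b =>
      a < b ∧
      (∀ t ∈ Icc a b, ∀ k < m, Φ^[k] (γ0 t) ∈ Hsym (s' k) ∧ F (Φ^[k] (γ0 t)) ∈ B.carrier) ∧
      MapsTo (fun t => Φ^[m] (γ0 t)) (Icc a b) A.carrier ∧
      ContinuousOn (fun t => Φ^[m] (γ0 t)) (Icc a b) ∧
      Crossing A (Φ^[m] (γ0 a)) (Φ^[m] (γ0 b)) with hP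
    have base : P 0 0 1 := by
      refine ⟨zero_lt_one, by omega, ?_, ?_, ?_⟩
      · simpa using hγ0A
      · simpa using hγ0c
      · simpa using hγ0cr
    have step : ∀ m a b, P m a b → ∃ a' b', a ≤ a' ∧ a' ≤ b' ∧ b' ≤ b ∧ P (m+1) a' b' := by
      intro m a b hPm
      obtain ⟨hab, hitin, hmap, hcont', hcr⟩ := hPm
      obtain ⟨a', b', j1, j2, j3, j4, j5⟩ := phi_step (hCFsym (s' m)) hCG hab hcont' hmap hcr
      have hsub : Icc a' b' ⊆ Icc a b := Icc_subset_Icc j1 j3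
      refine ⟨a', b', j1, j2.le, j3, j2, ?_, ?_, ?_, ?_⟩
      · intro t ht k hk
        rcases Nat.lt_succ_iff_lt_or_eq.mp hk with hk | hk
        · exact hitin t (hsub ht) k hk
        · subst hk; exact ⟨(j4 t ht).1, (j4 t ht).2.1⟩
      · intro t ht
        simp only [Function.iterate_succ_apply', hΦap]
        exact (j4 t ht).2.2
      · simp only [Function.iterate_succ_apply']
        refine hcont.comp (hcont'.mono hsub) ?_
        intro t ht
        rw [hHset]
        exact ⟨hHsymsub _ (j4 t ht).1, (j4 t ht).2.1⟩
      · simp only [Function.iterate_succ_apply', hΦap]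
        exact j5
    obtain ⟨t0, ht0⟩ := exists_point_in_nested base step
    refine ⟨γ0 t0, fun k => ?_⟩
    obtain ⟨a, b, hPk, hta, htb⟩ := ht0 (k + 1)
    exact hPk.2.1 t0 ⟨hta, htb⟩ k (Nat.lt_succ_self k)
  -- orbit space
  set T : Set ((ℝ × ℝ) × (ℝ × ℝ)) := (fun u => (u, Φ u)) '' Hset with hT
  have hTc : IsCompact T := hHsetc.image_of_continuousOn (continuousOn_id.prodMk hcont)
  have hmemT : ∀ p : (ℝ × ℝ) × (ℝ × ℝ), p ∈ T ↔ p.1 ∈ Hset ∧ Φ p.1 = p.2 := by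
    intro p
    constructor
    · rintro ⟨u, hu, rfl⟩; exact ⟨hu, rfl⟩
    · rintro ⟨h1, h2⟩; exact ⟨p.1, h1, by simp [h2]⟩
  set Orb : Set (ℤ → ℝ × ℝ) := {o | ∀ k, (o k, o (k + 1)) ∈ T} with hOrb
  have hOrbiff : ∀ o, o ∈ Orb ↔ (∀ k, o k ∈ Hset) ∧ (∀ k, Φ (o k) = o (k + 1)) := by
    intro o
    constructor
    · intro ho
      exact ⟨fun k => ((hmemT _).1 (ho k)).1, fun k => ((hmemT _).1 (ho k)).2⟩
    · intro ⟨h1, h2⟩ k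
      exact (hmemT _).2 ⟨h1 k, h2 k⟩
  have hOrbclosed : IsClosed Orb := by
    have heq : Orb = ⋂ k : ℤ, (fun o : ℤ → ℝ × ℝ => (o k, o (k + 1))) ⁻¹' T := by
      ext o; simp [hOrb, mem_iInter]
    rw [heq]
    exact isClosed_iInter fun k =>
      hTc.isClosed.preimage ((continuous_apply k).prodMk (continuous_apply (k + 1)))
  have hOrbc : IsCompact Orb := by
    refine (isCompact_univ_pi fun _ : ℤ => hHsetc).of_isClosed_subset hOrbclosed ?_
    intro o ho
    exact fun k _ => ((hmemT _).1 (ho k)).1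
  have hXinfOrb : Xinf = (fun o : ℤ → ℝ × ℝ => o 0) '' Orb := by
    rw [hXinf]
    ext x
    simp only [mem_setOf_eq, mem_image]
    constructor
    · rintro ⟨o, h0, h1, h2⟩; exact ⟨o, (hOrbiff o).2 ⟨h2, h1⟩, h0⟩
    · rintro ⟨o, ho, h0⟩
      obtain ⟨hh, hp⟩ := (hOrbiff o).1 ho
      exact ⟨o, h0, hp, hh⟩
  have hXc : IsCompact Xinf := hXinfOrb ▸ hOrbc.image (continuous_apply 0)
  -- uniqueness of orbits
  have huniq : ∀ o o' : ℤ → ℝ × ℝ, (∀ k, Φ (o k) = o (k + 1)) → (∀ k, o k ∈ Hset) →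
      (∀ k, Φ (o' k) = o' (k + 1)) → (∀ k, o' k ∈ Hset) → o 0 = o' 0 → ∀ k, o k = o' k := by
    intro o o' hoS hoM hoS' hoM' h0 k
    induction k using Int.induction_on with
    | zero => exact h0
    | succ i ih => rw [← hoS i, ← hoS' i, ih]
    | pred i ih =>
      apply hinj (hoM _) (hoM' _)
      have harith : (-(i : ℤ) - 1) + 1 = -(i : ℤ) := by ring
      rw [hoS, hoS', harith, ih]
  -- full itineraries
  have hfull : ∀ s : ℤ → Fin 2, ∃ o : ℤ → ℝ × ℝ,
      (∀ k, Φ (o k) = o (k + 1)) ∧ (∀ k, o k ∈ Hset) ∧ ∀ k, o k ∈ Hsym (s k) := by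
    intro s
    set E : ℕ → Set (ℤ → ℝ × ℝ) := fun n =>
      {o | (∀ k, o k ∈ Hset) ∧
        ∀ k : ℤ, -(n : ℤ) ≤ k → (Φ (o k) = o (k + 1) ∧ o k ∈ Hsym (s k))} with hE
    have hEclosed : ∀ n, IsClosed (E n) := by
      intro n
      have heq : E n = (univ.pi fun _ : ℤ => Hset) ∩
          ⋂ k : ℤ, ⋂ (_ : -(n : ℤ) ≤ k),
            ((fun o : ℤ → ℝ × ℝ => (o k, o (k + 1))) ⁻¹' T ∩
              (fun o : ℤ → ℝ × ℝ => o k) ⁻¹' Hsym (s k)) := by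
        ext o
        simp only [hE, mem_setOf_eq, mem_inter_iff, mem_pi, mem_univ, forall_true_left,
          mem_iInter, mem_preimage]
        constructor
        · rintro ⟨h1, h2⟩
          exact ⟨fun k => h1 k, fun k hk => ⟨(hmemT _).2 ⟨h1 k, (h2 k hk).1⟩, (h2 k hk).2⟩⟩
        · rintro ⟨h1, h2⟩
          exact ⟨fun k => h1 k, fun k hk => ⟨((hmemT _).1 (h2 k hk).1).2, (h2 k hk).2⟩⟩
      rw [heq]
      refine IsClosed.inter (isClosed_set_pi fun _ _ => hHsetc.isClosed) ?_
      refine isClosed_iInter fun k => isClosed_iInter fun _ => IsClosed.inter ?_ ?_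
      · exact hTc.isClosed.preimage ((continuous_apply k).prodMk (continuous_apply (k + 1)))
      · exact (hHsymC (s k)).isClosed.preimage (continuous_apply k)
    have hEcompact0 : IsCompact (E 0) := by
      refine (isCompact_univ_pi fun _ : ℤ => hHsetc).of_isClosed_subset (hEclosed 0) ?_
      intro o ho
      exact fun k _ => ho.1 k
    have hEmono : ∀ n, E (n + 1) ⊆ E n := by
      rintro n o ⟨h1, h2⟩
      exact ⟨h1, fun k hk => h2 k (le_trans (by push_cast; linarith) hk)⟩
    have hEne : ∀ n, (E n).Nonempty := by
      intro n
      obtain ⟨z, hz⟩ := hforward (fun m => s ((m : ℤ) - n))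
      have hzH : ∀ m : ℕ, Φ^[m] z ∈ Hset := by
        intro m
        rw [hHset]
        exact ⟨hHsymsub _ (hz m).1, (hz m).2⟩
      refine ⟨fun k => Φ^[(k + n).toNat] z, fun k => hzH _, ?_⟩
      intro k hk
      have hk0 : (0 : ℤ) ≤ k + n := by omega
      constructor
      · show Φ (Φ^[(k + n).toNat] z) = Φ^[(k + 1 + n).toNat] z
        have hsucc : (k + 1 + (n:ℤ)).toNat = (k + n).toNat + 1 := by omega
        rw [hsucc, Function.iterate_succ_apply']
      · have hcast : (((k + n).toNat : ℤ) - n) = k := by omega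
        have := (hz ((k + n).toNat)).1
        rwa [hcast] at this
    obtain ⟨o, ho⟩ := IsCompact.nonempty_iInter_of_sequence_nonempty_isCompact_isClosed
      E hEmono hEne hEcompact0 hEclosed
    simp only [mem_iInter] at ho
    refine ⟨o, ?_, fun k => (ho 0).1 k, ?_⟩
    · intro k
      exact ((ho k.natAbs).2 k (by omega)).1
    · intro k
      exact ((ho k.natAbs).2 k (by omega)).2
  -- chosen orbits
  have horbex : ∀ x ∈ Xinf, ∃ o : ℤ → ℝ × ℝ, o 0 = x ∧ (∀ k, Φ (o k) = o (k + 1)) ∧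
      ∀ k, o k ∈ Hset := by
    intro x hx; rw [hXinf] at hx; exact hx
  choose! ob hob0 hobS hobM using horbex
  have hXH : Xinf ⊆ Hset := by
    intro x hx
    have := hobM x hx 0
    rwa [hob0 x hx] at this
  have hmapsto : MapsTo Φ Xinf Xinf := by
    intro x hx
    rw [hXinf]
    refine ⟨fun k => ob x (k + 1), ?_, fun k => hobS x hx (k + 1), fun k => hobM x hx (k + 1)⟩
    show ob x (0 + 1) = Φ x
    rw [← hobS x hx 0, hob0 x hx]
  have himage : Φ '' Xinf = Xinf := by
    apply Subset.antisymm
    · rintro _ ⟨x, hx, rfl⟩; exact hmapsto hx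
    · intro y hy
      have hm1 : ob y (-1 + 1) = y := by
        rw [show (-1 : ℤ) + 1 = 0 by ring, hob0 y hy]
      refine ⟨ob y (-1), ?_, by rw [hobS y hy (-1), hm1]⟩
      rw [hXinf]
      refine ⟨fun k => ob y (k + -1), ?_, ?_, fun k => hobM y hy (k + -1)⟩
      · show ob y (0 + -1) = ob y (-1)
        norm_num
      · intro k
        have := hobS y hy (k + -1)
        rwa [show k + -1 + 1 = (k + 1) + -1 by ring] at this
  -- the coding map
  set π : ℝ × ℝ → ℤ → Fin 2 := fun x k => if ob x k ∈ H1 then 1 else 0 with hπ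
  have hObUniq : ∀ x ∈ Xinf, ∀ o : ℤ → ℝ × ℝ, o 0 = x → (∀ k, Φ (o k) = o (k + 1)) →
      (∀ k, o k ∈ Hset) → ∀ k, ob x k = o k := by
    intro x hx o h0 hS hM
    exact huniq _ _ (hobS x hx) (hobM x hx) hS hM (by rw [hob0 x hx, h0])
  have hsemi : ∀ x ∈ Xinf, π (Φ x) = bshift (π x) := by
    intro x hx
    have hΦx : Φ x ∈ Xinf := hmapsto hx
    have hEqOrb : ∀ k, ob (Φ x) k = ob x (k + 1) := by
      refine hObUniq (Φ x) hΦx (fun k => ob x (k + 1)) ?_ (fun k => hobS x hx (k + 1))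
        (fun k => hobM x hx (k + 1))
      show ob x (0 + 1) = Φ x
      rw [← hobS x hx 0, hob0 x hx]
    funext k
    simp only [hπ, bshift, hEqOrb k]
  have hsurj : π '' Xinf = univ := by
    rw [eq_univ_iff_forall]
    intro s
    obtain ⟨o, hoS, hoM, hoSym⟩ := hfull s
    have hx : o 0 ∈ Xinf := by rw [hXinf]; exact ⟨o, rfl, hoS, hoM⟩
    refine ⟨o 0, hx, ?_⟩
    have hEqOrb : ∀ k, ob (o 0) k = o k := hObUniq (o 0) hx o rfl hoS hoM
    funext k
    simp only [hπ, hEqOrb k]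
    have hks := hoSym k
    rcases (show s k = 0 ∨ s k = 1 from by omega) with h | h
    · rw [h] at hks ⊢
      rw [hHsym0] at hks
      rw [if_neg (disjoint_left.mp hdisj hks)]
    · rw [h] at hks ⊢
      rw [hHsym1] at hks
      rw [if_pos hks]
  -- compactness of coding pieces
  have hPkcompact : ∀ (k : ℤ) (i : Fin 2), IsCompact {x ∈ Xinf | ob x k ∈ Hsym i} := by
    intro k i
    have heq : {x ∈ Xinf | ob x k ∈ Hsym i} =
        (fun o : ℤ → ℝ × ℝ => o 0) '' (Orb ∩ (fun o : ℤ → ℝ × ℝ => o k) ⁻¹' Hsym i) := by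
      ext x
      constructor
      · rintro ⟨hx, hk⟩
        exact ⟨ob x, ⟨(hOrbiff _).2 ⟨hobM x hx, hobS x hx⟩, hk⟩, hob0 x hx⟩
      · rintro ⟨o, ⟨hoOrb, hok⟩, rfl⟩
        obtain ⟨hoM, hoS⟩ := (hOrbiff _).1 hoOrb
        have hx : o 0 ∈ Xinf := by rw [hXinf]; exact ⟨o, rfl, hoS, hoM⟩
        have hEq : ∀ j, ob (o 0) j = o j := hObUniq (o 0) hx o rfl hoS hoM
        exact ⟨hx, by rw [hEq k]; exact hok⟩
    rw [heq]
    exact (hOrbc.inter_right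
      ((hHsymC i).isClosed.preimage (continuous_apply k))).image (continuous_apply 0)
  have hpartition : ∀ x ∈ Xinf, ∀ k : ℤ, ob x k ∈ H0 ∨ ob x k ∈ H1 := by
    intro x hx k
    have := hobM x hx k
    rw [hHset] at this
    exact this.1
  have hπcont : ContinuousOn π Xinf := by
    rw [continuousOn_iff_continuous_restrict]
    apply continuous_pi
    intro k
    have hC1 : IsClosed {x : ↥Xinf | ob (↑x) k ∈ H1} := by
      have heq : {x : ↥Xinf | ob (↑x) k ∈ H1} =
          Subtype.val ⁻¹' {x ∈ Xinf | ob x k ∈ Hsym 1} := by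
        ext ⟨x, hx⟩
        simp [hHsym1, hx]
      rw [heq]
      exact (hPkcompact k 1).isClosed.preimage continuous_subtype_val
    have hC0 : IsClosed {x : ↥Xinf | ob (↑x) k ∈ H0} := by
      have heq : {x : ↥Xinf | ob (↑x) k ∈ H0} =
          Subtype.val ⁻¹' {x ∈ Xinf | ob x k ∈ Hsym 0} := by
        ext ⟨x, hx⟩
        simp [hHsym0, hx]
      rw [heq]
      exact (hPkcompact k 0).isClosed.preimage continuous_subtype_val
    have hopen : IsOpen {x : ↥Xinf | ob (↑x) k ∈ H1} := by
      have heq : {x : ↥Xinf | ob (↑x) k ∈ H1} = {x : ↥Xinf | ob (↑x) k ∈ H0}ᶜ := by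
        ext ⟨x, hx⟩
        simp only [mem_setOf_eq, mem_compl_iff]
        constructor
        · intro h1 h0; exact disjoint_left.mp hdisj h0 h1
        · intro h0
          rcases hpartition x hx k with h | h
          · exact absurd h h0
          · exact h
      rw [heq]
      exact hC0.isOpen_compl
    have hclopen : IsClopen {x : ↥Xinf | ob (↑x) k ∈ H1} := ⟨hC1, hopen⟩
    have heqf : (fun x : ↥Xinf => Xinf.restrict π x k) =
        ({x : ↥Xinf | ob (↑x) k ∈ H1}).piecewise (fun _ => 1) (fun _ => 0) := by
      funext x
      by_cases h : ob (↑x) k ∈ H1 <;>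
        simp [Set.piecewise, hπ, restrict_apply, h, mem_setOf_eq, Set.restrict]
    show Continuous fun x : ↥Xinf => Xinf.restrict π x k
    rw [heqf]
    exact Continuous.piecewise (by simp [hclopen.frontier_eq]) continuous_const continuous_const
  -- conclusion
  refine ⟨Xinf, ?_, hXc, Subset.rfl, hXH, himage, π, hπcont, hsurj, hsemi⟩
  obtain ⟨o, hoS, hoM, _⟩ := hfull fun _ => 0
  exact ⟨o 0, by rw [hXinf]; exact ⟨o, rfl, hoS, hoM⟩⟩
end
end

section
/- Under hypotheses (H), there exists a nonempty compact set X ⊆ H with Φ(X) = X such that the topological entropy of Φ restricted to X is at least log 2; in particular h_top(Φ) ≥ log 2. -/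
open Set

noncomputable section

namespace S2Aux

open ENNReal

def CrossPath (R : OrientedRectangle) (γ : ℝ → ℝ × ℝ) (a b : ℝ) : Prop :=
  a ≤ b ∧ ContinuousOn γ (Icc a b) ∧ MapsTo γ (Icc a b) R.carrier ∧
    ((γ a ∈ R.left ∧ γ b ∈ R.right) ∨ (γ a ∈ R.right ∧ γ b ∈ R.left))

lemma sides_disjoint (R : OrientedRectangle) {x : ℝ × ℝ} (hl : x ∈ R.left) (hr : x ∈ R.right) :
    False := by
  obtain ⟨p, hp, hpx⟩ := hl
  obtain ⟨q, hq, hqx⟩ := hr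
  rw [Set.mem_prod] at hp hq
  have hp1 : p.1 = 0 := hp.1
  have hq1 : q.1 = 1 := hq.1
  have hpu : p ∈ unitSq := ⟨by rw [hp1]; exact ⟨le_refl _, zero_le_one⟩, hp.2⟩
  have hqu : q ∈ unitSq := ⟨by rw [hq1]; exact ⟨zero_le_one, le_refl _⟩, hq.2⟩
  have := R.inj hpu hqu (hpx.trans hqx.symm)
  rw [← this] at hq1
  rw [hp1] at hq1
  norm_num at hq1

lemma CrossPath.lt {R : OrientedRectangle} {γ : ℝ → ℝ × ℝ} {a b : ℝ}
    (h : CrossPath R γ a b) : a < b := by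
  rcases lt_or_eq_of_le h.1 with h' | h'
  · exact h'
  · subst h'
    rcases h.2.2.2 with ⟨h1, h2⟩ | ⟨h1, h2⟩
    · exact (sides_disjoint R h1 h2).elim
    · exact (sides_disjoint R h2 h1).elim

lemma stretch_general {A B : OrientedRectangle} {K : Set (ℝ × ℝ)} {F : ℝ × ℝ → ℝ × ℝ}
    (hS : StretchesTo K F A B) {γ : ℝ → ℝ × ℝ} {a b : ℝ} (h : CrossPath A γ a b) :
    ∃ a' b', a ≤ a' ∧ a' ≤ b' ∧ b' ≤ b ∧
      (∀ t ∈ Icc a' b', γ t ∈ K ∧ F (γ t) ∈ B.carrier) ∧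
      ((F (γ a') ∈ B.left ∧ F (γ b') ∈ B.right) ∨
       (F (γ a') ∈ B.right ∧ F (γ b') ∈ B.left)) := by
  have hab : a < b := h.lt
  have hba : (0:ℝ) < b - a := by linarith
  set e : ℝ → ℝ := fun s => a + s * (b - a) with he
  have hemaps : MapsTo e (Icc (0:ℝ) 1) (Icc a b) := by
    intro s hs
    simp only [he, mem_Icc] at hs ⊢
    constructor
    · nlinarith [hs.1, hs.2]
    · nlinarith [hs.1, hs.2]
  have hecont : Continuous e := by fun_prop
  set γ' : ℝ → ℝ × ℝ := γ ∘ e with hγ'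
  have hγ'cont : ContinuousOn γ' (Icc 0 1) :=
    h.2.1.comp hecont.continuousOn hemaps
  have hγ'maps : MapsTo γ' (Icc (0:ℝ) 1) A.carrier := h.2.2.1.comp hemaps
  have he0 : e 0 = a := by simp [he]
  have he1 : e 1 = b := by simp [he]
  have hγ'0 : γ' 0 = γ a := by simp [hγ', he0]
  have hγ'1 : γ' 1 = γ b := by simp [hγ', he1]
  have hcross : (γ' 0 ∈ A.left ∧ γ' 1 ∈ A.right) ∨ (γ' 0 ∈ A.right ∧ γ' 1 ∈ A.left) := by
    rw [hγ'0, hγ'1]; exact h.2.2.2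
  obtain ⟨t', t'', ht', ht'', htle, hK, hB, hside⟩ := hS.2.2.2 γ' hγ'cont hγ'maps hcross
  refine ⟨e t', e t'', ?_, ?_, ?_, ?_, ?_⟩
  · simp only [he]; nlinarith [ht'.1]
  · simp only [he]; nlinarith [htle]
  · simp only [he]; nlinarith [ht''.2]
  · intro t ht
    simp only [he, mem_Icc] at ht
    have hs : (t - a) / (b - a) ∈ Icc t' t'' := by
      constructor
      · rw [le_div_iff₀ hba]; nlinarith [ht.1]
      · rw [div_le_iff₀ hba]; nlinarith [ht.2]
    have het : e ((t - a) / (b - a)) = t := by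
      simp only [he]; rw [div_mul_cancel₀ _ (ne_of_gt hba)]; ring
    have h1 := hK _ hs
    have h2 := hB _ hs
    rw [hγ'] at h1 h2
    simp only [Function.comp_apply, het] at h1 h2
    exact ⟨h1, h2⟩
  · have e1 : γ (e t') = γ' t' := rfl
    have e2 : γ (e t'') = γ' t'' := rfl
    rw [e1, e2]; exact hside

lemma cross_step {A B : OrientedRectangle} {Hi Hset : Set (ℝ × ℝ)}
    {F G Φ : ℝ × ℝ → ℝ × ℝ}
    (hCF : StretchesTo Hi F A B) (hCG : StretchesTo B.carrier G B A)
    (hΦ : Φ = G ∘ F) (hsub : Hi ∩ F ⁻¹' B.carrier ⊆ Hset)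
    (hcont : ContinuousOn Φ Hset)
    {γ : ℝ → ℝ × ℝ} {a b : ℝ} (h : CrossPath A γ a b) :
    ∃ a' b', a ≤ a' ∧ b' ≤ b ∧
      (∀ t ∈ Icc a' b', γ t ∈ Hi ∩ F ⁻¹' B.carrier) ∧
      CrossPath A (Φ ∘ γ) a' b' := by
  obtain ⟨a1, b1, ha1, hab1, hb1, hprop1, hside1⟩ := stretch_general hCF h
  have hsub1 : Icc a1 b1 ⊆ Icc a b := Icc_subset_Icc ha1 hb1
  have hc1 : CrossPath B (F ∘ γ) a1 b1 := by
    refine ⟨hab1, ?_, ?_, hside1⟩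
    · exact hCF.2.2.1.comp (h.2.1.mono hsub1) (fun t ht => (hprop1 t ht).1)
    · exact fun t ht => (hprop1 t ht).2
  obtain ⟨a2, b2, ha2, hab2, hb2, hprop2, hside2⟩ := stretch_general hCG hc1
  have hsub2 : Icc a2 b2 ⊆ Icc a1 b1 := Icc_subset_Icc ha2 hb2
  have hmem : ∀ t ∈ Icc a2 b2, γ t ∈ Hi ∩ F ⁻¹' B.carrier := by
    intro t ht
    exact ⟨(hprop1 t (hsub2 ht)).1, (hprop2 t ht).1⟩
  refine ⟨a2, b2, le_trans ha1 ha2, le_trans hb2 hb1, hmem, hab2, ?_, ?_, ?_⟩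
  · refine hcont.comp ((h.2.1.mono (hsub1.trans' hsub2)).mono (le_refl _)) ?_
    intro t ht
    exact hsub (hmem t ht)
  · intro t ht
    have := (hprop2 t ht).2
    simp only [hΦ, Function.comp_apply]
    exact this
  · simp only [hΦ, Function.comp_apply]
    exact hside2

lemma cross_iter {A B : OrientedRectangle} {Hset : Set (ℝ × ℝ)}
    {F G Φ : ℝ × ℝ → ℝ × ℝ} (HH : Fin 2 → Set (ℝ × ℝ))
    (hCF : ∀ i, StretchesTo (HH i) F A B) (hCG : StretchesTo B.carrier G B A)
    (hΦ : Φ = G ∘ F) (hsub : ∀ i, HH i ∩ F ⁻¹' B.carrier ⊆ Hset)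
    (hcont : ContinuousOn Φ Hset) :
    ∀ (n : ℕ) (w : ℕ → Fin 2) (γ : ℝ → ℝ × ℝ) (a b : ℝ), CrossPath A γ a b →
      ∃ a' b', a ≤ a' ∧ b' ≤ b ∧ CrossPath A (Φ^[n] ∘ γ) a' b' ∧
        ∀ t ∈ Icc a' b', ∀ i < n, Φ^[i] (γ t) ∈ HH (w i) ∩ F ⁻¹' B.carrier := by
  intro n
  induction n with
  | zero =>
    intro w γ a b h
    refine ⟨a, b, le_refl _, le_refl _, ?_, ?_⟩
    · simpa [Function.iterate_zero, Function.id_comp] using h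
    · intro t ht i hi; omega
  | succ n ih =>
    intro w γ a b h
    obtain ⟨a1, b1, ha1, hb1, hmem1, hc1⟩ := cross_step (hCF (w 0)) hCG hΦ (hsub (w 0)) hcont h
    obtain ⟨a', b', ha', hb', hc', hitin⟩ := ih (fun i => w (i + 1)) (Φ ∘ γ) a1 b1 hc1
    refine ⟨a', b', le_trans ha1 ha', le_trans hb' hb1, ?_, ?_⟩
    · have : Φ^[n + 1] ∘ γ = Φ^[n] ∘ (Φ ∘ γ) := by
        funext t
        simp [Function.iterate_succ_apply]
      rw [this]
      exact hc'
    · intro t ht i hi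
      rcases Nat.eq_zero_or_pos i with rfl | hipos
      · simpa using hmem1 t (Icc_subset_Icc ha' hb' ht)
      · obtain ⟨j, rfl⟩ := Nat.exists_eq_add_of_le hipos
        rw [Nat.add_comm 1 j] at *
        have := hitin t ht j (by omega)
        simpa [Function.iterate_succ_apply] using this

lemma iter_cont {Φ : ℝ × ℝ → ℝ × ℝ} {Hset : Set (ℝ × ℝ)} (hcont : ContinuousOn Φ Hset) :
    ∀ n, ContinuousOn Φ^[n] {x | ∀ i < n, Φ^[i] x ∈ Hset} := by
  intro n
  induction n with
  | zero => simpa [Function.iterate_zero] using (continuous_id : Continuous (id : ℝ × ℝ → ℝ × ℝ))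
  | succ n ih =>
    have : Φ^[n + 1] = Φ ∘ Φ^[n] := Function.iterate_succ' Φ n
    rw [this]
    refine ContinuousOn.comp hcont (ih.mono ?_) ?_
    · intro x hx i hi
      exact hx i (by omega)
    · intro x hx
      exact hx n (by omega)

lemma itin_closed {Φ : ℝ × ℝ → ℝ × ℝ} {Hset : Set (ℝ × ℝ)} (hcont : ContinuousOn Φ Hset)
    (hHclosed : IsClosed Hset) :
    ∀ (n : ℕ) (C : ℕ → Set (ℝ × ℝ)), (∀ i, IsClosed (C i)) → (∀ i, C i ⊆ Hset) →
      IsClosed {x | ∀ i < n, Φ^[i] x ∈ C i} := by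
  intro n
  induction n with
  | zero =>
    intro C _ _
    convert isClosed_univ using 1
    ext x
    simp
  | succ n ih =>
    intro C hC hCH
    have hD : IsClosed {x | ∀ i < n, Φ^[i] x ∈ C i} := ih C hC hCH
    have hDH : IsClosed ({x | ∀ i < n, Φ^[i] x ∈ Hset}) := by
      have := ih (fun _ => Hset) (fun _ => hHclosed) (fun _ => le_refl _)
      exact this
    have hkey : IsClosed ({x | ∀ i < n, Φ^[i] x ∈ Hset} ∩ Φ^[n] ⁻¹' (C n)) :=
      (iter_cont hcont n).preimage_isClosed_of_isClosed hDH (hC n)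
    have heq : {x | ∀ i < n + 1, Φ^[i] x ∈ C i} =
        {x | ∀ i < n, Φ^[i] x ∈ C i} ∩
          ({x | ∀ i < n, Φ^[i] x ∈ Hset} ∩ Φ^[n] ⁻¹' (C n)) := by
      ext x
      simp only [mem_setOf_eq, mem_inter_iff, mem_preimage]
      constructor
      · intro hx
        exact ⟨fun i hi => hx i (by omega),
          fun i hi => hCH i (hx i (by omega)), hx n (by omega)⟩
      · rintro ⟨h1, _, h2⟩ i hi
        rcases Nat.lt_succ_iff_lt_or_eq.1 hi with h | rfl
        · exact h1 i h
        · exact h2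
    rw [heq]
    exact hD.inter hkey

lemma entropy_ge {T : ℝ × ℝ → ℝ × ℝ} {Y : Set (ℝ × ℝ)} {U : Set ((ℝ × ℝ) × (ℝ × ℝ))}
    (hU : U ∈ uniformity (ℝ × ℝ))
    (hcard : ∀ n : ℕ, ((2:ℕ∞)^n : ℕ∞) ≤ Dynamics.netMaxcard T Y U n) :
    (Real.log 2 : EReal) ≤ Dynamics.coverEntropy T Y := by
  refine le_trans ?_ (Dynamics.netEntropyEntourage_le_coverEntropy T Y hU)
  rw [Dynamics.netEntropyEntourage]
  apply Filter.le_limsup_of_frequently_le'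
  rw [Filter.frequently_atTop]
  intro N
  refine ⟨max N 1, le_max_left _ _, ?_⟩
  set n := max N 1
  have hn1 : 1 ≤ n := le_max_right _ _
  have hn0 : (0:EReal) < (n : ℕ) := by exact_mod_cast Nat.lt_of_lt_of_le Nat.zero_lt_one hn1
  have hnt : ((n : ℕ) : EReal) ≠ ⊤ := by
    exact EReal.natCast_ne_top n
  rw [EReal.le_div_iff_mul_le hn0 hnt]
  have h1 : ((2:ℝ≥0∞))^n ≤ ((Dynamics.netMaxcard T Y U n : ℕ∞) : ℝ≥0∞) := by
    exact_mod_cast ENat.toENNReal_le.2 (hcard n)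
  have h2 : ENNReal.log ((2:ℝ≥0∞)^n) ≤ ENNReal.log ((Dynamics.netMaxcard T Y U n : ℕ∞) : ℝ≥0∞) :=
    ENNReal.log_monotone h1
  rw [ENNReal.log_pow] at h2
  have hlog2 : ENNReal.log (2:ℝ≥0∞) = (Real.log 2 : EReal) := by
    rw [ENNReal.log_pos_real (by norm_num) (by norm_num)]
    norm_num
  rw [hlog2] at h2
  calc (Real.log 2 : EReal) * n = (n : EReal) * (Real.log 2 : EReal) := mul_comm _ _
    _ ≤ _ := h2

end S2Aux

open S2Aux

/-- Under hypotheses (H), there is a nonempty compact `Φ`-invariant set `X ⊆ H` on which the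
topological entropy of `Φ` is at least `log 2`; in particular `h_top(Φ) ≥ log 2`. -/
theorem statement2
    (F G : ℝ × ℝ → ℝ × ℝ) (DF DG : Set (ℝ × ℝ))
    (A B : OrientedRectangle)
    (H0 H1 : Set (ℝ × ℝ))
    (hdisj : Disjoint H0 H1)
    (hH0 : H0 ⊆ A.carrier ∩ DF) (hH1 : H1 ⊆ A.carrier ∩ DF)
    (hCF0 : StretchesTo H0 F A B) (hCF1 : StretchesTo H1 F A B)
    (hBDG : B.carrier ⊆ DG)
    (hCG : StretchesTo B.carrier G B A)
    (Φ : ℝ × ℝ → ℝ × ℝ) (hΦ : Φ = G ∘ F)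
    (Hset : Set (ℝ × ℝ)) (hHset : Hset = (H0 ∪ H1) ∩ F ⁻¹' B.carrier)
    (hcont : ContinuousOn Φ Hset) (hinj : InjOn Φ Hset) :
    ∃ X : Set (ℝ × ℝ), X.Nonempty ∧ IsCompact X ∧ X ⊆ Hset ∧ Φ '' X = X ∧
      (Real.log 2 : EReal) ≤ Dynamics.coverEntropy Φ X ∧
      (Real.log 2 : EReal) ≤ Dynamics.coverEntropy Φ univ := by
  classical
  -- basic sets
  set HH : Fin 2 → Set (ℝ × ℝ) := fun i => if i = 0 then H0 else H1 with hHHdef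
  have hHH0 : HH 0 = H0 := by simp [hHHdef]
  have hHH1 : HH 1 = H1 := by simp [hHHdef]
  have hCF : ∀ i, StretchesTo (HH i) F A B := by
    intro i
    fin_cases i
    · simpa [hHHdef] using hCF0
    · simpa [hHHdef] using hCF1
  set K : Fin 2 → Set (ℝ × ℝ) := fun i => HH i ∩ F ⁻¹' B.carrier with hKdef
  have hKsub : ∀ i, K i ⊆ Hset := by
    intro i x hx
    rw [hHset]
    refine ⟨?_, hx.2⟩
    have h1 := hx.1
    fin_cases i
    · exact Or.inl (by simpa [hHHdef] using h1)
    · exact Or.inr (by simpa [hHHdef] using h1)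
  have hunit : IsCompact unitSq := IsCompact.prod isCompact_Icc isCompact_Icc
  have hBcomp : IsCompact B.carrier := hunit.image_of_continuousOn B.cont
  have hKclosed : ∀ i, IsClosed (K i) :=
    fun i => (hCF i).2.2.1.preimage_isClosed_of_isClosed (hCF i).1.isClosed hBcomp.isClosed
  have hKcomp : ∀ i, IsCompact (K i) :=
    fun i => (hCF i).1.of_isClosed_subset (hKclosed i) inter_subset_left
  have hHsetEq : Hset = K 0 ∪ K 1 := by
    rw [hHset, show K 0 = H0 ∩ F ⁻¹' B.carrier from by simp [hKdef, hHHdef],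
      show K 1 = H1 ∩ F ⁻¹' B.carrier from by simp [hKdef, hHHdef]]
    exact union_inter_distrib_right H0 H1 _
  have hHscomp : IsCompact Hset := hHsetEq ▸ (hKcomp 0).union (hKcomp 1)
  -- base path
  set γ0 : ℝ → ℝ × ℝ := fun t => A.h (t, 0) with hγ0def
  have hγ0 : CrossPath A γ0 0 1 := by
    refine ⟨zero_le_one, ?_, ?_, Or.inl ⟨?_, ?_⟩⟩
    · refine A.cont.comp (Continuous.continuousOn (by fun_prop)) ?_
      intro t ht
      exact ⟨ht, by constructor <;> norm_num⟩
    · intro t ht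
      exact ⟨(t, 0), ⟨ht, by constructor <;> norm_num⟩, rfl⟩
    · exact ⟨(0, 0), ⟨rfl, by constructor <;> norm_num⟩, rfl⟩
    · exact ⟨(1, 0), ⟨rfl, by constructor <;> norm_num⟩, rfl⟩
  -- finite itineraries
  have hfin : ∀ (w : ℕ → Fin 2) (n : ℕ), ∃ x, ∀ i < n, Φ^[i] x ∈ K (w i) := by
    intro w n
    obtain ⟨a', b', _, _, hc', hitin⟩ :=
      cross_iter HH hCF hCG hΦ hKsub hcont n w γ0 0 1 hγ0
    exact ⟨γ0 a', fun i hi => hitin a' ⟨le_refl _, hc'.1⟩ i hi⟩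
  have hIclosed : ∀ (C : ℕ → Fin 2) (n : ℕ), IsClosed {x | ∀ i < n, Φ^[i] x ∈ K (C i)} :=
    fun C n => itin_closed hcont hHscomp.isClosed n (fun i => K (C i))
      (fun i => hKclosed _) (fun i => hKsub _)
  -- infinite itineraries
  have hitin_all : ∀ w : ℕ → Fin 2, ∃ x, ∀ i, Φ^[i] x ∈ K (w i) := by
    intro w
    set V : ℕ → Set (ℝ × ℝ) := fun n => {x | ∀ i < n + 1, Φ^[i] x ∈ K (w i)} with hV
    have hVdec : ∀ n, V (n + 1) ⊆ V n := fun n x hx i hi => hx i (by omega)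
    have hVne : ∀ n, (V n).Nonempty := fun n => hfin w (n + 1)
    have hVclosed : ∀ n, IsClosed (V n) := fun n => hIclosed w (n + 1)
    have hV0comp : IsCompact (V 0) :=
      (hKcomp (w 0)).of_isClosed_subset (hVclosed 0)
        (fun x hx => by simpa using hx 0 (by omega))
    obtain ⟨x, hx⟩ := IsCompact.nonempty_iInter_of_sequence_nonempty_isCompact_isClosed
      V hVdec hVne hV0comp hVclosed
    exact ⟨x, fun i => (mem_iInter.1 hx i) i (by omega)⟩
  -- the maximal forward-invariant set
  set Λ : Set (ℝ × ℝ) := {x | ∀ i : ℕ, Φ^[i] x ∈ Hset} with hΛdef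
  have hΛeq : Λ = ⋂ n, {x | ∀ i < n, Φ^[i] x ∈ Hset} := by
    ext x
    simp only [hΛdef, mem_setOf_eq, mem_iInter]
    exact ⟨fun h n i _ => h i, fun h i => h (i + 1) i (by omega)⟩
  have hΛclosed : IsClosed Λ := by
    rw [hΛeq]
    exact isClosed_iInter (fun n => itin_closed hcont hHscomp.isClosed n (fun _ => Hset)
      (fun _ => hHscomp.isClosed) (fun _ => le_refl _))
  have hΛsub : Λ ⊆ Hset := fun x hx => by simpa using hx 0
  have hΛcomp : IsCompact Λ := hHscomp.of_isClosed_subset hΛclosed hΛsub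
  have hΛinv : MapsTo Φ Λ Λ := by
    intro x hx i
    rw [← Function.iterate_succ_apply]
    exact hx (i + 1)
  set Λn : ℕ → Set (ℝ × ℝ) := fun n => Φ^[n] '' Λ with hΛndef
  have hΛsubD : ∀ n, Λ ⊆ {x | ∀ i < n, Φ^[i] x ∈ Hset} := fun n x hx i _ => hx i
  have hΛncomp : ∀ n, IsCompact (Λn n) :=
    fun n => hΛcomp.image_of_continuousOn ((iter_cont hcont n).mono (hΛsubD n))
  have hΛnsub : ∀ n, Λn n ⊆ Λ := by
    rintro n _ ⟨y, hy, rfl⟩ i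
    rw [← Function.iterate_add_apply]
    exact hy (i + n)
  have hΛnsucc : ∀ n, Λn (n + 1) = Φ^[n] '' (Φ '' Λ) := by
    intro n
    rw [hΛndef]
    simp only
    rw [Function.iterate_succ, image_comp]
  have hΛnsucc' : ∀ n, Λn (n + 1) = Φ '' (Λn n) := by
    intro n
    rw [hΛndef]
    simp only
    rw [Function.iterate_succ', image_comp]
  have hΛndec : ∀ n, Λn (n + 1) ⊆ Λn n := by
    intro n
    rw [hΛnsucc n]
    exact image_mono (hΛinv.image_subset)
  have hΛne : Λ.Nonempty := by
    obtain ⟨x, hx⟩ := hitin_all (fun _ => 0)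
    exact ⟨x, fun i => hKsub 0 (hx i)⟩
  have hΛnne : ∀ n, (Λn n).Nonempty := fun n => hΛne.image _
  -- the invariant set X
  set X : Set (ℝ × ℝ) := ⋂ n, Λn n with hXdef
  have hΛn0 : Λn 0 = Λ := by simp [hΛndef]
  have hXsubΛ : X ⊆ Λ := by
    intro x hx
    rw [← hΛn0]
    exact mem_iInter.1 hx 0
  have hXsub : X ⊆ Hset := hXsubΛ.trans hΛsub
  have hXclosed : IsClosed X := isClosed_iInter (fun n => (hΛncomp n).isClosed)
  have hXcomp : IsCompact X := hΛcomp.of_isClosed_subset hXclosed hXsubΛ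
  have hXne : X.Nonempty :=
    IsCompact.nonempty_iInter_of_sequence_nonempty_isCompact_isClosed
      Λn hΛndec hΛnne (hΛncomp 0) (fun n => (hΛncomp n).isClosed)
  have hXinv : Φ '' X = X := by
    apply Subset.antisymm
    · rintro _ ⟨x, hx, rfl⟩
      rw [hXdef, mem_iInter]
      intro n
      have : Φ x ∈ Λn (n + 1) := by
        rw [hΛnsucc' n]
        exact mem_image_of_mem Φ (mem_iInter.1 hx n)
      exact hΛndec n this
    · intro x hx
      set W : ℕ → Set (ℝ × ℝ) := fun n => Λn n ∩ Φ ⁻¹' {x} with hWdef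
      have hWclosed : ∀ n, IsClosed (W n) :=
        fun n => (hcont.mono ((hΛnsub n).trans hΛsub)).preimage_isClosed_of_isClosed
          (hΛncomp n).isClosed isClosed_singleton
      have hWdec : ∀ n, W (n + 1) ⊆ W n :=
        fun n => inter_subset_inter (hΛndec n) (le_refl _)
      have hWne : ∀ n, (W n).Nonempty := by
        intro n
        have hxn : x ∈ Λn (n + 1) := mem_iInter.1 hx (n + 1)
        rw [hΛnsucc' n] at hxn
        obtain ⟨y, hy, hyx⟩ := hxn
        exact ⟨y, hy, by simp [hyx]⟩
      have hW0comp : IsCompact (W 0) :=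
        (hΛncomp 0).of_isClosed_subset (hWclosed 0) inter_subset_left
      obtain ⟨y, hy⟩ := IsCompact.nonempty_iInter_of_sequence_nonempty_isCompact_isClosed
        W hWdec hWne hW0comp hWclosed
      have hyX : y ∈ X := by
        rw [hXdef, mem_iInter]
        exact fun n => (mem_iInter.1 hy n).1
      have hyx : Φ y = x := by
        have := (mem_iInter.1 hy 0).2
        simpa using this
      exact ⟨y, hyX, hyx⟩
  -- itinerary points inside X
  have hXitin : ∀ w : ℕ → Fin 2, ∃ x ∈ X, ∀ i, Φ^[i] x ∈ K (w i) := by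
    intro w
    set Sw : Set (ℝ × ℝ) := {x | ∀ i, Φ^[i] x ∈ K (w i)} with hSwdef
    have hSweq : Sw = ⋂ n, {x | ∀ i < n, Φ^[i] x ∈ K (w i)} := by
      ext x
      simp only [hSwdef, mem_setOf_eq, mem_iInter]
      exact ⟨fun h n i _ => h i, fun h i => h (i + 1) i (by omega)⟩
    have hSwclosed : IsClosed Sw := by
      rw [hSweq]
      exact isClosed_iInter (fun n => hIclosed w n)
    have hSwne : ∀ m, (Sw ∩ Λn m).Nonempty := by
      intro m
      obtain ⟨y, hy⟩ := hitin_all (fun j => if j < m then w 0 else w (j - m))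
      have hyΛ : y ∈ Λ := fun i => hKsub _ (hy i)
      refine ⟨Φ^[m] y, ?_, mem_image_of_mem _ hyΛ⟩
      intro i
      rw [← Function.iterate_add_apply]
      have h := hy (i + m)
      have hlt : ¬ (i + m < m) := by omega
      rw [if_neg hlt, Nat.add_sub_cancel] at h
      exact h
    set V : ℕ → Set (ℝ × ℝ) := fun m => Sw ∩ Λn m with hVdef
    have hVdec : ∀ m, V (m + 1) ⊆ V m :=
      fun m => inter_subset_inter (le_refl _) (hΛndec m)
    have hV0comp : IsCompact (V 0) := (hΛncomp 0).inter_left hSwclosed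
    have hVclosed : ∀ m, IsClosed (V m) := fun m => hSwclosed.inter (hΛncomp m).isClosed
    obtain ⟨x, hx⟩ := IsCompact.nonempty_iInter_of_sequence_nonempty_isCompact_isClosed
      V hVdec hSwne hV0comp hVclosed
    refine ⟨x, ?_, (mem_iInter.1 hx 0).1⟩
    rw [hXdef, mem_iInter]
    exact fun n => (mem_iInter.1 hx n).2
  -- separation constant
  obtain ⟨δ, hδpos, hthick⟩ := hdisj.exists_thickenings hCF0.1 hCF1.1.isClosed
  have hsep : ∀ p ∈ H0, ∀ q ∈ H1, δ ≤ dist p q := by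
    intro p hp q hq
    by_contra hlt
    push_neg at hlt
    have h1 : q ∈ Metric.thickening δ H0 :=
      Metric.mem_thickening_iff.2 ⟨p, hp, by rwa [dist_comm]⟩
    have h2 : q ∈ Metric.thickening δ H1 :=
      Metric.mem_thickening_iff.2 ⟨q, hq, by simpa using hδpos⟩
    exact Set.disjoint_left.1 hthick h1 h2
  set U : Set ((ℝ × ℝ) × (ℝ × ℝ)) := {p | dist p.1 p.2 < δ / 2} with hUdef
  have hU : U ∈ uniformity (ℝ × ℝ) := Metric.dist_mem_uniformity (by positivity)
  choose pt hptX hptK using hXitin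
  have hHHmem : ∀ (w : ℕ → Fin 2) (i : ℕ), Φ^[i] (pt w) ∈ HH (w i) := fun w i => (hptK w i).1
  have hdist : ∀ (w w' : ℕ → Fin 2) (i : ℕ), w i ≠ w' i →
      δ ≤ dist (Φ^[i] (pt w)) (Φ^[i] (pt w')) := by
    intro w w' i hne
    have hA := hHHmem w i
    have hB := hHHmem w' i
    have h2 : ∀ a : Fin 2, a = 0 ∨ a = 1 := by decide
    rcases h2 (w i) with h | h <;> rcases h2 (w' i) with h' | h'
    · exact absurd (h.trans h'.symm) hne
    · rw [h, hHH0] at hA; rw [h', hHH1] at hB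
      exact hsep _ hA _ hB
    · rw [h, hHH1] at hA; rw [h', hHH0] at hB
      rw [dist_comm]
      exact hsep _ hB _ hA
    · exact absurd (h.trans h'.symm) hne
  have hballsep : ∀ (w w' : ℕ → Fin 2) (n : ℕ), (∃ i < n, w i ≠ w' i) →
      Disjoint (UniformSpace.ball (pt w) (Dynamics.dynEntourage Φ U n))
        (UniformSpace.ball (pt w') (Dynamics.dynEntourage Φ U n)) := by
    rintro w w' n ⟨i, hi, hne⟩
    rw [Set.disjoint_left]
    intro z hz hz'
    rw [Dynamics.mem_ball_dynEntourage] at hz hz'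
    have h1 : dist (Φ^[i] (pt w)) (Φ^[i] z) < δ / 2 := hz i hi
    have h2 : dist (Φ^[i] (pt w')) (Φ^[i] z) < δ / 2 := hz' i hi
    have h3 := hdist w w' i hne
    have h4 := dist_triangle (Φ^[i] (pt w)) (Φ^[i] z) (Φ^[i] (pt w'))
    rw [dist_comm (Φ^[i] z) (Φ^[i] (pt w'))] at h4
    linarith
  -- large dynamical nets
  have hnetcard : ∀ (Y : Set (ℝ × ℝ)), (∀ w, pt w ∈ Y) →
      ∀ n : ℕ, ((2:ℕ∞)^n) ≤ Dynamics.netMaxcard Φ Y U n := by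
    intro Y hY n
    set ext : (Fin n → Fin 2) → (ℕ → Fin 2) :=
      fun w i => if h : i < n then w ⟨i, h⟩ else 0 with hext
    have hinj2 : Function.Injective (fun w : Fin n → Fin 2 => pt (ext w)) := by
      intro w w' heq
      simp only at heq
      by_contra hne
      obtain ⟨j, hj⟩ := Function.ne_iff.1 hne
      have hne' : ext w j.1 ≠ ext w' j.1 := by
        simp only [hext, dif_pos j.2]
        simpa [Fin.eta] using hj
      have h1 := hHHmem (ext w) j.1
      have h2 := hHHmem (ext w') j.1
      rw [heq] at h1
      have h2' : ∀ a : Fin 2, a = 0 ∨ a = 1 := by decide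
      rcases h2' (ext w j.1) with h | h <;> rcases h2' (ext w' j.1) with h' | h'
      · exact hne' (h.trans h'.symm)
      · rw [h, hHH0] at h1; rw [h', hHH1] at h2
        exact Set.disjoint_left.1 hdisj h1 h2
      · rw [h, hHH1] at h1; rw [h', hHH0] at h2
        exact Set.disjoint_left.1 hdisj h2 h1
      · exact hne' (h.trans h'.symm)
    set s : Finset (ℝ × ℝ) :=
      Finset.image (fun w : Fin n → Fin 2 => pt (ext w)) Finset.univ with hs
    have hcard : s.card = 2 ^ n := by
      rw [hs, Finset.card_image_of_injective _ hinj2, Finset.card_univ]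
      simp [Fintype.card_fun]
    have hnet : Dynamics.IsDynNetIn Φ Y U n ↑s := by
      constructor
      · intro x hx
        simp only [hs, Finset.coe_image, Finset.coe_univ, image_univ, mem_range] at hx
        obtain ⟨w, rfl⟩ := hx
        exact hY _
      · intro x hx y hy hxy
        simp only [hs, Finset.coe_image, Finset.coe_univ, image_univ, mem_range] at hx hy
        obtain ⟨w, rfl⟩ := hx
        obtain ⟨w', rfl⟩ := hy
        have hww : w ≠ w' := by rintro rfl; exact hxy rfl
        obtain ⟨j, hj⟩ := Function.ne_iff.1 hww
        refine hballsep _ _ n ⟨j.1, j.2, ?_⟩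
        simp only [hext, dif_pos j.2]
        simpa [Fin.eta] using hj
    have hle := hnet.card_le_netMaxcard
    refine le_trans (le_of_eq ?_) hle
    rw [hcard]
    push_cast
    rfl
  refine ⟨X, hXne, hXcomp, hXsub, hXinv, ?_, ?_⟩
  · exact entropy_ge hU (hnetcard X (fun w => hptX w))
  · exact entropy_ge hU (hnetcard univ (fun w => mem_univ _))
end
end

section
/- Under hypotheses (H), there exists a compact set Λ ⊆ H with Φ(Λ) = Λ such that Φ restricted to Λ is semi-conjugate to the two-sided Bernoulli shift on two symbols (there is a continuous surjection π: Λ → Σ₂ with π ∘ Φ = σ ∘ π), is topologically transitive on Λ, and displays sensitive dependence on initial conditions on Λ. -/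
open Set

noncomputable section

open Function
open scoped Classical

structure ChaosSetup where
  Phi : ℝ × ℝ → ℝ × ℝ
  K : Fin 2 → Set (ℝ × ℝ)
  cpt : ∀ i, IsCompact (K i)
  nonemp : ∀ i, (K i).Nonempty
  disj : Disjoint (K 0) (K 1)
  cont : ContinuousOn Phi (K 0 ∪ K 1)
  inj : Set.InjOn Phi (K 0 ∪ K 1)
  cross : ∀ w : ℕ → Fin 2, ∀ n : ℕ, ∃ x, ∀ j ≤ n, Phi^[j] x ∈ K (w j)

namespace ChaosSetup
variable (S : ChaosSetup)

def X : Set (ℝ × ℝ) := S.K 0 ∪ S.K 1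

lemma Ksub (i : Fin 2) : S.K i ⊆ S.X := by
  fin_cases i
  · exact subset_union_left
  · exact subset_union_right

lemma cptX : IsCompact S.X := (S.cpt 0).union (S.cpt 1)

end ChaosSetup
/-- iterates continuity -/
lemma contOn_iterate {f : ℝ × ℝ → ℝ × ℝ} {s t : Set (ℝ × ℝ)} (hc : ContinuousOn f t)
    (hst : s ⊆ t) (hm : MapsTo f s s) : ∀ n, ContinuousOn f^[n] s := by
  intro n
  induction n with
  | zero => simpa using continuousOn_id
  | succ n ih =>
    rw [Function.iterate_succ]
    exact ih.comp (hc.mono hst) hm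

namespace ChaosSetup
variable (S : ChaosSetup)

/-- finite-stage forward-invariance sets -/
def P (n : ℕ) : Set (ℝ × ℝ) := {x | ∀ j ≤ n, S.Phi^[j] x ∈ S.X}

lemma P_zero : S.P 0 = S.X := by
  ext x; constructor
  · intro h; simpa using h 0 le_rfl
  · intro h j hj; interval_cases j; simpa using h

lemma P_succ (n : ℕ) : S.P (n + 1) = S.X ∩ S.Phi ⁻¹' S.P n := by
  ext x
  constructor
  · intro h
    refine ⟨by simpa using h 0 (Nat.zero_le _), fun j hj => ?_⟩
    rw [← Function.iterate_succ_apply]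
    exact h (j + 1) (by omega)
  · rintro ⟨h0, h⟩ j hj
    match j with
    | 0 => simpa using h0
    | j + 1 =>
      rw [Function.iterate_succ_apply]
      exact h j (by omega)

lemma P_cpt (n : ℕ) : IsCompact (S.P n) := by
  induction n with
  | zero => rw [S.P_zero]; exact S.cptX
  | succ n ih =>
    rw [S.P_succ]
    exact IsCompact.of_isClosed_subset S.cptX
      (S.cont.preimage_isClosed_of_isClosed S.cptX.isClosed ih.isClosed) inter_subset_left

lemma P_sub_X (n : ℕ) : S.P n ⊆ S.X := fun x hx => by simpa using hx 0 (Nat.zero_le _)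

def Lp : Set (ℝ × ℝ) := ⋂ n, S.P n

lemma Lp_sub_X : S.Lp ⊆ S.X := (iInter_subset _ 0).trans (S.P_sub_X 0)

lemma Lp_cpt : IsCompact S.Lp :=
  IsCompact.of_isClosed_subset (S.P_cpt 0) (isClosed_iInter fun n => (S.P_cpt n).isClosed)
    (iInter_subset _ 0)

lemma mem_Lp {x : ℝ × ℝ} : x ∈ S.Lp ↔ ∀ n : ℕ, S.Phi^[n] x ∈ S.X := by
  constructor
  · intro h n; exact (mem_iInter.1 h n) n le_rfl
  · intro h; exact mem_iInter.2 fun n j hj => h j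

lemma Lp_mapsTo : MapsTo S.Phi S.Lp S.Lp := by
  intro x hx
  rw [mem_Lp] at hx ⊢
  intro n
  rw [← Function.iterate_succ_apply]
  exact hx (n + 1)

lemma contOn_Phi_Lp : ContinuousOn S.Phi S.Lp := S.cont.mono S.Lp_sub_X

lemma Lp_iter_mapsTo (n : ℕ) : MapsTo S.Phi^[n] S.Lp S.Lp := S.Lp_mapsTo.iterate n

lemma contOn_iter_Lp (n : ℕ) : ContinuousOn S.Phi^[n] S.Lp :=
  contOn_iterate S.cont S.Lp_sub_X S.Lp_mapsTo n

/-- the invariant core of a compact forward-invariant subset of `Lp` -/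
def core (S0 : Set (ℝ × ℝ)) : Set (ℝ × ℝ) := ⋂ n, S.Phi^[n] '' S0

section core
variable {S0 : Set (ℝ × ℝ)}

lemma core_img_cpt (h0 : IsCompact S0) (hsub : S0 ⊆ S.Lp) (n : ℕ) : IsCompact (S.Phi^[n] '' S0) :=
  h0.image_of_continuousOn ((S.contOn_iter_Lp n).mono hsub)

lemma core_img_sub (hm : MapsTo S.Phi S0 S0) (n : ℕ) : S.Phi^[n] '' S0 ⊆ S0 := by
  intro x hx
  obtain ⟨y, hy, rfl⟩ := hx
  exact hm.iterate n hy

lemma core_img_anti (hm : MapsTo S.Phi S0 S0) (n : ℕ) : S.Phi^[n + 1] '' S0 ⊆ S.Phi^[n] '' S0 := by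
  rw [Function.iterate_succ, Set.image_comp]
  exact Set.image_mono hm.image_subset

lemma core_cpt (h0 : IsCompact S0) (hsub : S0 ⊆ S.Lp) : IsCompact (S.core S0) :=
  IsCompact.of_isClosed_subset (core_img_cpt S h0 hsub 0)
    (isClosed_iInter fun n => (core_img_cpt S h0 hsub n).isClosed) (iInter_subset _ 0)

lemma core_sub (hm : MapsTo S.Phi S0 S0) : S.core S0 ⊆ S0 := by
  refine (iInter_subset _ 0).trans ?_
  simp

lemma core_nonempty (h0 : IsCompact S0) (hsub : S0 ⊆ S.Lp) (hm : MapsTo S.Phi S0 S0) (hne : ∀ n, (S.Phi^[n] '' S0).Nonempty) : (S.core S0).Nonempty := by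
  refine IsCompact.nonempty_iInter_of_sequence_nonempty_isCompact_isClosed _
    (fun n => core_img_anti S hm n) hne (core_img_cpt S h0 hsub 0)
    (fun n => (core_img_cpt S h0 hsub n).isClosed)

lemma core_inv (h0 : IsCompact S0) (hsub : S0 ⊆ S.Lp) (hm : MapsTo S.Phi S0 S0) : S.Phi '' S.core S0 = S.core S0 := by
  apply Set.Subset.antisymm
  · rintro _ ⟨x, hx, rfl⟩
    refine mem_iInter.2 fun n => ?_
    match n with
    | 0 =>
      simpa using hm (core_sub S hm hx)
    | n + 1 =>
      obtain ⟨y, hy, hyx⟩ := mem_iInter.1 hx n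
      exact ⟨y, hy, by rw [Function.iterate_succ_apply', hyx]⟩
  · intro x hx
    -- fibers
    set W : ℕ → Set (ℝ × ℝ) := fun n => (S.Phi^[n] '' S0) ∩ S.Phi ⁻¹' {x} with hW
    have hWcl : ∀ n, IsClosed (W n) :=
      fun n => (S.contOn_Phi_Lp.mono ((core_img_sub S hm n).trans hsub)).preimage_isClosed_of_isClosed
        (core_img_cpt S h0 hsub n).isClosed isClosed_singleton
    have hWcpt : ∀ n, IsCompact (W n) :=
      fun n => IsCompact.of_isClosed_subset (core_img_cpt S h0 hsub n) (hWcl n) inter_subset_left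
    have hWanti : ∀ n, W (n + 1) ⊆ W n :=
      fun n => inter_subset_inter_left _ (core_img_anti S hm n)
    have hWne : ∀ n, (W n).Nonempty := by
      intro n
      obtain ⟨y, hy, hyx⟩ := mem_iInter.1 hx (n + 1)
      rw [Function.iterate_succ_apply'] at hyx
      exact ⟨S.Phi^[n] y, ⟨y, hy, rfl⟩, hyx⟩
    obtain ⟨y, hy⟩ := IsCompact.nonempty_iInter_of_sequence_nonempty_isCompact_isClosed W
      hWanti hWne (hWcpt 0) hWcl
    have hy' := mem_iInter.1 hy
    have hyc : y ∈ S.core S0 := mem_iInter.2 fun n => ((hy' n).1)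
    have : S.Phi y = x := (hy' 0).2
    exact ⟨y, hyc, this⟩

end core

def Lam : Set (ℝ × ℝ) := S.core S.Lp

lemma Lam_cpt : IsCompact S.Lam := core_cpt S S.Lp_cpt Subset.rfl

lemma Lam_sub_Lp : S.Lam ⊆ S.Lp := core_sub S S.Lp_mapsTo

lemma Lam_sub_X : S.Lam ⊆ S.X := S.Lam_sub_Lp.trans S.Lp_sub_X

lemma Lam_inv : S.Phi '' S.Lam = S.Lam := core_inv S S.Lp_cpt Subset.rfl S.Lp_mapsTo

lemma Lam_mapsTo : MapsTo S.Phi S.Lam S.Lam := fun x hx => S.Lam_inv ▸ ⟨x, hx, rfl⟩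

lemma Lam_iter_mapsTo (n : ℕ) : MapsTo S.Phi^[n] S.Lam S.Lam := S.Lam_mapsTo.iterate n

lemma contOn_Phi_Lam : ContinuousOn S.Phi S.Lam := S.cont.mono S.Lam_sub_X

lemma contOn_iter_Lam (n : ℕ) : ContinuousOn S.Phi^[n] S.Lam :=
  contOn_iterate S.cont S.Lam_sub_X S.Lam_mapsTo n

end ChaosSetup

namespace ChaosSetup
variable (S : ChaosSetup)

/-- itinerary symbol -/
def itin (z : ℝ × ℝ) : Fin 2 := if z ∈ S.K 1 then 1 else 0

lemma itin_eq {z : ℝ × ℝ} {i : Fin 2} (hz : z ∈ S.K i) : S.itin z = i := by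
  fin_cases i
  · have : z ∉ S.K 1 := fun h => S.disj.ne_of_mem hz h rfl
    simp [itin, this]
  · simp only [Fin.mk_one] at hz
    simp [itin, hz]

lemma itin_ne {z₁ z₂ : ℝ × ℝ} (h₁ : z₁ ∈ S.X) (h₂ : z₂ ∈ S.X)
    (hne : S.itin z₁ ≠ S.itin z₂) : (z₁ ∈ S.K 0 ∧ z₂ ∈ S.K 1) ∨ (z₁ ∈ S.K 1 ∧ z₂ ∈ S.K 0) := by
  by_cases hz1 : z₁ ∈ S.K 1
  · refine Or.inr ⟨hz1, ?_⟩
    rcases h₂ with h | h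
    · exact h
    · exact absurd (by rw [S.itin_eq hz1, S.itin_eq h]) hne
  · have hz1' : z₁ ∈ S.K 0 := h₁.resolve_right hz1
    refine Or.inl ⟨hz1', ?_⟩
    rcases h₂ with h | h
    · exact absurd (by rw [S.itin_eq hz1', S.itin_eq h]) hne
    · exact h

lemma contOn_itin : ContinuousOn S.itin S.X := by
  obtain ⟨U, V, hU, hV, hKU, hKV, hUV⟩ :=
    SeparatedNhds.of_isCompact_isCompact (S.cpt 0) (S.cpt 1) S.disj
  intro x hx
  rcases hx with hx0 | hx1
  · have hev : ∀ᶠ y in nhdsWithin x S.X, S.itin y = (0 : Fin 2) := by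
      filter_upwards [mem_nhdsWithin_of_mem_nhds (hU.mem_nhds (hKU hx0))] with y hy
      have : y ∉ S.K 1 := fun h => (Set.disjoint_left.1 hUV) hy (hKV h)
      simp [itin, this]
    exact (continuousWithinAt_const (b := (0 : Fin 2))).congr_of_eventuallyEq hev (S.itin_eq hx0)
  · have hev : ∀ᶠ y in nhdsWithin x S.X, S.itin y = (1 : Fin 2) := by
      filter_upwards [mem_nhdsWithin_of_mem_nhds (hV.mem_nhds (hKV hx1)),
        self_mem_nhdsWithin] with y hy hyX
      have : y ∈ S.K 1 := by
        rcases hyX with h0 | h1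
        · exact absurd hy (fun hyV => (Set.disjoint_left.1 hUV) (hKU h0) hyV)
        · exact h1
      simp [itin, this]
    exact (continuousWithinAt_const (b := (1 : Fin 2))).congr_of_eventuallyEq hev (S.itin_eq hx1)

end ChaosSetup

namespace ChaosSetup
variable (S : ChaosSetup)

/-- inverse of `Phi` on `Lam` -/
def g : ℝ × ℝ → ℝ × ℝ := Function.invFunOn S.Phi S.Lam

lemma exists_pre {x : ℝ × ℝ} (hx : x ∈ S.Lam) : ∃ y ∈ S.Lam, S.Phi y = x := by
  have := S.Lam_inv
  rw [← this] at hx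
  obtain ⟨y, hy, hyx⟩ := hx
  exact ⟨y, hy, hyx⟩

lemma g_mem {x : ℝ × ℝ} (hx : x ∈ S.Lam) : S.g x ∈ S.Lam :=
  Function.invFunOn_mem (S.exists_pre hx)

lemma Phi_g {x : ℝ × ℝ} (hx : x ∈ S.Lam) : S.Phi (S.g x) = x :=
  Function.invFunOn_eq (S.exists_pre hx)

lemma injOn_Lam : Set.InjOn S.Phi S.Lam := S.inj.mono S.Lam_sub_X

lemma g_Phi {x : ℝ × ℝ} (hx : x ∈ S.Lam) : S.g (S.Phi x) = x := by
  have h1 : S.Phi x ∈ S.Lam := S.Lam_mapsTo hx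
  exact S.injOn_Lam (S.g_mem h1) hx (S.Phi_g h1)

lemma g_mapsTo : MapsTo S.g S.Lam S.Lam := fun x hx => S.g_mem hx

lemma g_iter_mem {x : ℝ × ℝ} (hx : x ∈ S.Lam) (n : ℕ) : S.g^[n] x ∈ S.Lam :=
  S.g_mapsTo.iterate n hx

lemma g_iter_Phi_iter {x : ℝ × ℝ} (hx : x ∈ S.Lam) (n : ℕ) : S.g^[n] (S.Phi^[n] x) = x := by
  induction n with
  | zero => simp
  | succ n ih =>
    rw [Function.iterate_succ_apply' (f := S.Phi), Function.iterate_succ_apply (f := S.g)]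
    rw [S.g_Phi (S.Lam_iter_mapsTo n hx), ih]

lemma contOn_g : ContinuousOn S.g S.Lam := by
  haveI : CompactSpace S.Lam := isCompact_iff_compactSpace.mp S.Lam_cpt
  set e : S.Lam → S.Lam := fun y => ⟨S.Phi y.1, S.Lam_mapsTo y.2⟩ with he
  have hc : Continuous e := by
    apply Continuous.subtype_mk
    exact continuousOn_iff_continuous_restrict.mp S.contOn_Phi_Lam
  have hbij : Function.Bijective e := by
    constructor
    · rintro ⟨a, ha⟩ ⟨b, hb⟩ hab
      have : S.Phi a = S.Phi b := congrArg Subtype.val hab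
      exact Subtype.ext (S.injOn_Lam ha hb this)
    · rintro ⟨x, hx⟩
      obtain ⟨y, hy, hyx⟩ := S.exists_pre hx
      exact ⟨⟨y, hy⟩, Subtype.ext hyx⟩
  let E : S.Lam ≃ S.Lam := Equiv.ofBijective e hbij
  have hEc : Continuous (E : S.Lam → S.Lam) := hc
  let hom : S.Lam ≃ₜ S.Lam := Continuous.homeoOfEquivCompactToT2 (f := E) hEc
  have key : ∀ y : S.Lam, S.g y.1 = (hom.symm y).1 := by
    intro y
    have h1 : S.Phi ((hom.symm y).1 : ℝ × ℝ) = y.1 := by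
      have := hom.apply_symm_apply y
      exact congrArg Subtype.val this
    exact S.injOn_Lam (S.g_mem y.2) (hom.symm y).2 (by rw [S.Phi_g y.2, h1])
  rw [continuousOn_iff_continuous_restrict]
  have : Set.restrict S.Lam S.g = fun y => ((hom.symm y).1 : ℝ × ℝ) := by
    funext y
    exact key y
  show Continuous (Set.restrict S.Lam S.g)
  rw [this]
  exact continuous_subtype_val.comp hom.symm.continuous

lemma contOn_g_iter (n : ℕ) : ContinuousOn S.g^[n] S.Lam :=
  contOn_iterate S.contOn_g Subset.rfl S.g_mapsTo n

/-- the itinerary map -/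
def pim (x : ℝ × ℝ) : ℤ → Fin 2 := fun i =>
  if 0 ≤ i then S.itin (S.Phi^[i.toNat] x) else S.itin (S.g^[i.natAbs] x)

lemma pim_nonneg (x : ℝ × ℝ) (n : ℕ) : S.pim x n = S.itin (S.Phi^[n] x) := by
  simp [pim]

lemma pim_negSucc (x : ℝ × ℝ) (n : ℕ) : S.pim x (Int.negSucc n) = S.itin (S.g^[n + 1] x) := by
  have h1 : ¬ (0 : ℤ) ≤ Int.negSucc n := by rw [Int.negSucc_eq]; omega
  have h2 : (Int.negSucc n).natAbs = n + 1 := rfl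
  simp only [pim, h1, if_false, h2]

lemma contOn_pim : ContinuousOn S.pim S.Lam := by
  rw [continuousOn_pi]
  intro i
  rcases le_or_gt 0 i with h | h
  · have : (fun x => S.pim x i) = fun x => S.itin (S.Phi^[i.toNat] x) := by
      funext x; simp [pim, h]
    rw [this]
    exact S.contOn_itin.comp (S.contOn_iter_Lam i.toNat)
      (fun x hx => S.Lam_sub_X (S.Lam_iter_mapsTo i.toNat hx))
  · have : (fun x => S.pim x i) = fun x => S.itin (S.g^[i.natAbs] x) := by
      funext x; simp [pim, not_le.mpr h]
    rw [this]
    exact S.contOn_itin.comp (S.contOn_g_iter i.natAbs)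
      (fun x hx => S.Lam_sub_X (S.g_iter_mem hx i.natAbs))

lemma pim_Phi {x : ℝ × ℝ} (hx : x ∈ S.Lam) : S.pim (S.Phi x) = bshift (S.pim x) := by
  funext i
  match i with
  | Int.ofNat n =>
    have h1 : S.pim (S.Phi x) (Int.ofNat n) = S.itin (S.Phi^[n] (S.Phi x)) := S.pim_nonneg _ n
    have h2 : bshift (S.pim x) (Int.ofNat n) = S.pim x ((n : ℤ) + 1) := rfl
    have h3 : ((n : ℤ) + 1) = ((n + 1 : ℕ) : ℤ) := by push_cast; ring
    rw [h1, h2, h3, S.pim_nonneg x (n + 1), Function.iterate_succ_apply]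
  | Int.negSucc n =>
    have h1 : S.pim (S.Phi x) (Int.negSucc n) = S.itin (S.g^[n + 1] (S.Phi x)) :=
      S.pim_negSucc _ n
    have h2 : S.g^[n + 1] (S.Phi x) = S.g^[n] x := by
      rw [Function.iterate_succ_apply, S.g_Phi hx]
    rw [h1, h2]
    show _ = S.pim x (Int.negSucc n + 1)
    match n with
    | 0 =>
      have : (Int.negSucc 0 + 1) = ((0 : ℕ) : ℤ) := by decide
      rw [this, S.pim_nonneg]
      simp
    | n + 1 =>
      have : (Int.negSucc (n + 1) + 1) = Int.negSucc n := by
        rw [Int.negSucc_eq, Int.negSucc_eq]; push_cast; ring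
      rw [this, S.pim_negSucc]

lemma pim_Phi_iter {x : ℝ × ℝ} (hx : x ∈ S.Lam) (n : ℕ) :
    S.pim (S.Phi^[n] x) = bshift^[n] (S.pim x) := by
  induction n with
  | zero => simp
  | succ n ih =>
    rw [Function.iterate_succ_apply' (f := S.Phi), Function.iterate_succ_apply' (f := bshift)]
    rw [S.pim_Phi (S.Lam_iter_mapsTo n hx), ih]

end ChaosSetup

namespace ChaosSetup
variable (S : ChaosSetup)

/-- finite itinerary cylinders -/
def Kn (w : ℕ → Fin 2) (n : ℕ) : Set (ℝ × ℝ) := {x | ∀ j ≤ n, S.Phi^[j] x ∈ S.K (w j)}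

lemma Kn_nonempty (w : ℕ → Fin 2) (n : ℕ) : (S.Kn w n).Nonempty := by
  obtain ⟨x, hx⟩ := S.cross w n
  exact ⟨x, hx⟩

lemma Kn_zero (w : ℕ → Fin 2) : S.Kn w 0 = S.K (w 0) := by
  ext x
  constructor
  · intro h; simpa using h 0 le_rfl
  · intro h j hj; interval_cases j; simpa using h

lemma Kn_succ (w : ℕ → Fin 2) (n : ℕ) :
    S.Kn w (n + 1) = S.K (w 0) ∩ S.Phi ⁻¹' (S.Kn (fun j => w (j + 1)) n) := by
  ext x
  constructor
  · intro h
    refine ⟨by simpa using h 0 (Nat.zero_le _), fun j hj => ?_⟩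
    rw [← Function.iterate_succ_apply]
    exact h (j + 1) (by omega)
  · rintro ⟨h0, h⟩ j hj
    match j with
    | 0 => simpa using h0
    | j + 1 =>
      rw [Function.iterate_succ_apply]
      exact h j (by omega)

lemma Kn_sub (w : ℕ → Fin 2) (n : ℕ) : S.Kn w n ⊆ S.K (w 0) := by
  intro x hx
  simpa using hx 0 (Nat.zero_le _)

lemma Kn_cpt (w : ℕ → Fin 2) (n : ℕ) : IsCompact (S.Kn w n) := by
  induction n generalizing w with
  | zero => rw [S.Kn_zero]; exact S.cpt _
  | succ n ih =>
    rw [S.Kn_succ]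
    refine IsCompact.of_isClosed_subset (S.cpt (w 0)) ?_ inter_subset_left
    exact ((S.cont.mono (S.Ksub (w 0)))).preimage_isClosed_of_isClosed
      (S.cpt (w 0)).isClosed (ih _).isClosed

lemma Kn_anti (w : ℕ → Fin 2) (n : ℕ) : S.Kn w (n + 1) ⊆ S.Kn w n :=
  fun x hx j hj => hx j (by omega)

/-- infinite forward itinerary sets -/
def T (w : ℕ → Fin 2) : Set (ℝ × ℝ) := {x | ∀ k : ℕ, S.Phi^[k] x ∈ S.K (w k)}

lemma T_eq (w : ℕ → Fin 2) : S.T w = ⋂ n, S.Kn w n := by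
  ext x
  simp only [T, mem_setOf_eq, mem_iInter]
  constructor
  · intro h n j hj; exact h j
  · intro h k; exact h k k le_rfl

lemma T_cpt (w : ℕ → Fin 2) : IsCompact (S.T w) := by
  rw [S.T_eq]
  exact IsCompact.of_isClosed_subset (S.Kn_cpt w 0)
    (isClosed_iInter fun n => (S.Kn_cpt w n).isClosed) (iInter_subset _ 0)

lemma T_nonempty (w : ℕ → Fin 2) : (S.T w).Nonempty := by
  rw [S.T_eq]
  exact IsCompact.nonempty_iInter_of_sequence_nonempty_isCompact_isClosed _
    (S.Kn_anti w) (S.Kn_nonempty w) (S.Kn_cpt w 0) (fun n => (S.Kn_cpt w n).isClosed)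

lemma T_sub_Lp (w : ℕ → Fin 2) : S.T w ⊆ S.Lp := by
  intro x hx
  rw [mem_Lp]
  exact fun n => S.Ksub (w n) (hx n)

/-- surjectivity of the itinerary map -/
lemma pim_surj (s : ℤ → Fin 2) : ∃ x ∈ S.Lam, S.pim x = s := by
  set wf : ℕ → ℕ → Fin 2 := fun n j => s ((j : ℤ) - (n : ℤ)) with hwf
  set Tn : ℕ → Set (ℝ × ℝ) := fun n => S.T (wf n) with hTn
  set Sn : ℕ → Set (ℝ × ℝ) := fun n => S.Phi^[n] '' Tn n with hSn
  have hTstep : ∀ n, S.Phi '' Tn (n + 1) ⊆ Tn n := by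
    rintro n _ ⟨y, hy, rfl⟩
    intro k
    rw [← Function.iterate_succ_apply]
    have := hy (k + 1)
    have harg : wf (n + 1) (k + 1) = wf n k := by
      simp only [hwf]
      congr 1
      push_cast
      ring
    rwa [harg] at this
  have hScpt : ∀ n, IsCompact (Sn n) :=
    fun n => (S.T_cpt _).image_of_continuousOn ((S.contOn_iter_Lp n).mono (S.T_sub_Lp _))
  have hSanti : ∀ n, Sn (n + 1) ⊆ Sn n := by
    intro n
    have : S.Phi^[n + 1] '' Tn (n + 1) = S.Phi^[n] '' (S.Phi '' Tn (n + 1)) := by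
      rw [← Set.image_comp, ← Function.iterate_succ]
    show S.Phi^[n + 1] '' Tn (n + 1) ⊆ S.Phi^[n] '' Tn n
    rw [this]
    exact Set.image_mono (hTstep n)
  have hSne : ∀ n, (Sn n).Nonempty := fun n => ((S.T_nonempty _).image _)
  obtain ⟨x, hx⟩ := IsCompact.nonempty_iInter_of_sequence_nonempty_isCompact_isClosed Sn
    hSanti hSne (hScpt 0) (fun n => (hScpt n).isClosed)
  have hxS : ∀ n, x ∈ Sn n := mem_iInter.1 hx
  have hxLam : x ∈ S.Lam := by
    refine mem_iInter.2 fun n => ?_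
    exact (Set.image_mono (S.T_sub_Lp _)) (hxS n)
  refine ⟨x, hxLam, ?_⟩
  funext i
  match i with
  | Int.ofNat k =>
    have hx0 : x ∈ Tn 0 := by
      have := hxS 0
      simpa [hSn] using this
    have hKk : S.Phi^[k] x ∈ S.K (wf 0 k) := hx0 k
    rw [Int.ofNat_eq_natCast, S.pim_nonneg x k, S.itin_eq hKk]
    simp [hwf]
  | Int.negSucc m =>
    set j : ℕ := m + 1 with hj
    -- find y ∈ Lam ∩ T (wf j) with Phi^[j] y = x
    set Y : ℕ → Set (ℝ × ℝ) := fun r => (Tn j ∩ S.Phi^[r] '' S.Lp) ∩ S.Phi^[j] ⁻¹' {x} with hY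
    have hYcl : ∀ r, IsClosed (Y r) := by
      intro r
      have hC : IsCompact (Tn j ∩ S.Phi^[r] '' S.Lp) :=
        (S.T_cpt _).inter_right (core_img_cpt S S.Lp_cpt Subset.rfl r).isClosed
      exact ((S.contOn_iter_Lp j).mono (inter_subset_left.trans (S.T_sub_Lp _))).preimage_isClosed_of_isClosed
        hC.isClosed isClosed_singleton
    have hYcpt : ∀ r, IsCompact (Y r) := by
      intro r
      have hC : IsCompact (Tn j ∩ S.Phi^[r] '' S.Lp) :=
        (S.T_cpt _).inter_right (core_img_cpt S S.Lp_cpt Subset.rfl r).isClosed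
      exact IsCompact.of_isClosed_subset hC (hYcl r) inter_subset_left
    have hYanti : ∀ r, Y (r + 1) ⊆ Y r := by
      intro r
      apply inter_subset_inter_left
      exact inter_subset_inter_right _ (core_img_anti S S.Lp_mapsTo r)
    have hYne : ∀ r, (Y r).Nonempty := by
      intro r
      have := hxS (j + r)
      obtain ⟨z, hz, hzx⟩ := this
      refine ⟨S.Phi^[r] z, ⟨⟨?_, ⟨z, S.T_sub_Lp _ hz, rfl⟩⟩, ?_⟩⟩
      · intro k
        rw [← Function.iterate_add_apply]
        have := hz (k + r)
        have harg : wf (j + r) (k + r) = wf j k := by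
          simp only [hwf]
          congr 1
          push_cast
          ring
        rwa [harg] at this
      · show S.Phi^[r] z ∈ S.Phi^[j] ⁻¹' {x}
        simp only [mem_preimage, mem_singleton_iff]
        rw [← Function.iterate_add_apply]
        exact hzx
    obtain ⟨y, hy⟩ := IsCompact.nonempty_iInter_of_sequence_nonempty_isCompact_isClosed Y
      hYanti hYne (hYcpt 0) hYcl
    have hy' := mem_iInter.1 hy
    have hyT : y ∈ Tn j := ((hy' 0).1).1
    have hyLam : y ∈ S.Lam := mem_iInter.2 fun r => ((hy' r).1).2
    have hyx : S.Phi^[j] y = x := (hy' 0).2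
    have hgy : S.g^[j] x = y := by rw [← hyx, S.g_iter_Phi_iter hyLam]
    rw [S.pim_negSucc x m, ← hj, hgy]
    have : y ∈ S.K (wf j 0) := hyT 0
    rw [S.itin_eq this]
    simp only [hwf]
    congr 1

end ChaosSetup

section Tape

/-- surjective enumeration of words -/
def wenum (n : ℕ) : List (Fin 2) := ((Encodable.decode (α := List (Fin 2)) n).getD []) ++ [0]

lemma wenum_surj (w : List (Fin 2)) : wenum (Encodable.encode w) = w ++ [0] := by
  simp [wenum, Encodable.encodek]

lemma wenum_len (n : ℕ) : 1 ≤ (wenum n).length := by simp [wenum]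

def pref : ℕ → List (Fin 2)
  | 0 => []
  | k + 1 => pref k ++ wenum k

def toff (k : ℕ) : ℕ := (pref k).length

lemma toff_succ (k : ℕ) : toff (k + 1) = toff k + (wenum k).length := by
  simp [toff, pref]

lemma toff_ge (k : ℕ) : k ≤ toff k := by
  induction k with
  | zero => simp
  | succ k ih =>
    have := wenum_len k
    rw [toff_succ]
    omega

lemma pref_prefix {k k' : ℕ} (h : k ≤ k') : (pref k) <+: (pref k') := by
  induction k' with
  | zero =>
    have : k = 0 := by omega
    subst this; exact List.prefix_rfl
  | succ k' ih =>
    rcases Nat.lt_or_ge k (k' + 1) with h' | h'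
    · have := ih (by omega)
      refine this.trans ?_
      show pref k' <+: pref k' ++ wenum k'
      exact List.prefix_append _ _
    · have : k = k' + 1 := by omega
      subst this; exact List.prefix_rfl

def tape (m : ℕ) : Fin 2 := (pref (m + 1)).getD m 0

lemma getD_of_prefix {l₁ l₂ : List (Fin 2)} (h : l₁ <+: l₂) {i : ℕ} (hi : i < l₁.length) :
    l₂.getD i 0 = l₁.getD i 0 := by
  obtain ⟨t, rfl⟩ := h
  rw [List.getD_eq_getElem _ _ hi, List.getD_eq_getElem _ _ (by simp; omega)]
  exact List.getElem_append_left hi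

lemma tape_stable (K m : ℕ) (h : m < toff K) : tape m = (pref K).getD m 0 := by
  have h1 : m < toff (m + 1) := by have := toff_ge (m + 1); omega
  rcases Nat.le_total K (m + 1) with hK | hK
  · rw [tape, getD_of_prefix (pref_prefix hK) h]
  · rw [tape, (getD_of_prefix (pref_prefix hK) h1).symm]

lemma tape_spec (k j : ℕ) (hj : j < (wenum k).length) :
    tape (toff k + j) = (wenum k).getD j 0 := by
  have h1 : toff k + j < toff (k + 1) := by rw [toff_succ]; omega
  rw [tape_stable (k + 1) _ h1]
  show (pref k ++ wenum k).getD (toff k + j) 0 = _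
  have hlen1 : toff k + j < (pref k ++ wenum k).length := by
    rw [List.length_append]
    have : (pref k).length = toff k := rfl
    omega
  rw [List.getD_eq_getElem _ _ hlen1, List.getD_eq_getElem _ _ hj]
  have hge : (pref k).length ≤ toff k + j := by
    have : (pref k).length = toff k := rfl
    omega
  rw [List.getElem_append_right hge]
  congr 1
  have : (pref k).length = toff k := rfl
  omega

/-- every word occurs at arbitrarily late positions -/
lemma tape_occ (w : List (Fin 2)) (M : ℕ) :
    ∃ P ≥ M, ∀ j < w.length, tape (P + j) = w.getD j 0 := by
  set w' : List (Fin 2) := List.replicate M 0 ++ w with hw'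
  set k := Encodable.encode w' with hk
  have hwk : wenum k = (List.replicate M 0 ++ w) ++ [0] := wenum_surj w'
  refine ⟨toff k + M, by have := toff_ge k; omega, ?_⟩
  intro j hj
  have hlen : M + j < (wenum k).length := by
    rw [hwk]; simp; omega
  have htapespec := tape_spec k (M + j) hlen
  rw [← Nat.add_assoc] at htapespec
  rw [htapespec, hwk]
  rw [hwk] at hlen
  rw [List.getD_eq_getElem _ _ hlen, List.getD_eq_getElem _ _ hj]
  have h2 : M + j < (List.replicate (n := M) (0 : Fin 2) ++ w).length := by simp; omega
  rw [List.getElem_append_left h2]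
  have h3 : (List.replicate (n := M) (0 : Fin 2)).length ≤ M + j := by simp
  rw [List.getElem_append_right h3]
  congr 1
  simp

/-- the transitive point of the two-sided shift -/
def tpt : ℤ → Fin 2 := fun i => if 0 ≤ i then tape i.toNat else 0

lemma bshift_iter (s : ℤ → Fin 2) (n : ℕ) (i : ℤ) : bshift^[n] s i = s (i + n) := by
  induction n generalizing s i with
  | zero => simp
  | succ n ih =>
    rw [Function.iterate_succ_apply, ih]
    show s (i + n + 1) = _
    congr 1
    push_cast
    ring

/-- density of the forward orbit of `tpt`, with arbitrarily large entry times -/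
lemma tpt_dense (s : ℤ → Fin 2) (N M : ℕ) :
    ∃ n ≥ M, ∀ i : ℤ, i.natAbs ≤ N → bshift^[n] tpt i = s i := by
  set w : List (Fin 2) := List.ofFn (fun j : Fin (2 * N + 1) => s ((j : ℤ) - (N : ℤ))) with hw
  obtain ⟨P, hPM, hP⟩ := tape_occ w M
  refine ⟨P + N, by omega, ?_⟩
  intro i hi
  rw [bshift_iter]
  have hge : 0 ≤ i + (P + N : ℕ) := by
    have : -(N : ℤ) ≤ i := by omega
    push_cast
    omega
  have htp : tpt (i + (P + N : ℕ)) = tape (i + (P + N : ℕ)).toNat := by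
    rw [tpt, if_pos hge]
  set j : ℕ := (i + N).toNat with hj
  have hjN : (j : ℤ) = i + N := by
    rw [hj]; rw [Int.toNat_of_nonneg (by omega)]
  have hjlt : j < 2 * N + 1 := by omega
  have htn : (i + (P + N : ℕ)).toNat = P + j := by
    have : (i + (P + N : ℕ)) = ((P + j : ℕ) : ℤ) := by push_cast; omega
    rw [this, Int.toNat_natCast]
  rw [htp, htn]
  have hwl : j < w.length := by rw [hw]; simp; omega
  rw [hP j hwl]
  rw [hw, List.getD_eq_getElem _ _ hwl]
  rw [List.getElem_ofFn]
  congr 1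
  simp
  omega

/-- any finite shift of `tpt` avoids every proper closed invariant set -/
lemma tpt_avoid (P : Set (ℤ → Fin 2)) (hcl : IsClosed P)
    (hinv : ∀ u ∈ P, bshift u ∈ P) (hne : P ≠ univ) (m : ℕ) : bshift^[m] tpt ∉ P := by
  intro hmem
  obtain ⟨s, hs⟩ : ∃ s, s ∉ P := by
    by_contra h
    push_neg at h
    exact hne (eq_univ_of_forall h)
  have hso : s ∈ Pᶜ := hs
  obtain ⟨I, u, hIu, hsub⟩ := isOpen_pi_iff.1 hcl.isOpen_compl s hso
  set N : ℕ := I.sup (fun i => i.natAbs) with hN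
  obtain ⟨n, hnm, hn⟩ := tpt_dense s N m
  have hmem' : bshift^[n] tpt ∈ P := by
    have : ∀ k : ℕ, bshift^[m + k] tpt ∈ P := by
      intro k
      induction k with
      | zero => simpa using hmem
      | succ k ih =>
        have heq : m + (k + 1) = (m + k) + 1 := by ring
        rw [heq, Function.iterate_succ_apply']
        exact hinv _ ih
    have := this (n - m)
    rwa [show m + (n - m) = n by omega] at this
  have : bshift^[n] tpt ∈ (I : Set ℤ).pi u := by
    intro i hi
    have hiN : i.natAbs ≤ N := Finset.le_sup (f := fun i : ℤ => i.natAbs) hi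
    rw [hn i hiN]
    exact (hIu i hi).2
  exact hsub this hmem'

end Tape

lemma periodic_forcing {u : ℕ → Fin 2} {k c : ℕ} (hk : 1 ≤ k)
    (per : ∀ n, u (n + k) = u n) (v : Fin 2) (win : ∀ i, i < k → u (c + i) = v) :
    u 0 = v := by
  have hwin' : ∀ j, u (c + j) = v := by
    intro j
    induction j using Nat.strong_induction_on with
    | _ j ih =>
      rcases Nat.lt_or_ge j k with h | h
      · exact win j h
      · have heq : c + j = (c + (j - k)) + k := by omega
        rw [heq, per]
        exact ih (j - k) (by omega)
  have hmul : ∀ q n, u (n + k * q) = u n := by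
    intro q
    induction q with
    | zero => simp
    | succ q ih =>
      intro n
      have heq : n + k * (q + 1) = (n + k * q) + k := by ring
      rw [heq, per]
      exact ih n
  have h1 : u 0 = u (0 + k * (c + 1)) := (hmul (c + 1) 0).symm
  have hkc : c + 1 ≤ k * (c + 1) := Nat.le_mul_of_pos_left _ (by omega)
  have h2 : 0 + k * (c + 1) = c + (k * (c + 1) - c) := by omega
  rw [h1, h2, hwin' _]

namespace ChaosSetup
variable (S : ChaosSetup)

lemma dist_sep : ∃ δ : ℝ, 0 < δ ∧ ∀ p ∈ S.K 0, ∀ q ∈ S.K 1, δ ≤ dist p q := by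
  have hcpt : IsCompact ((S.K 0) ×ˢ (S.K 1)) := (S.cpt 0).prod (S.cpt 1)
  have hne : ((S.K 0) ×ˢ (S.K 1)).Nonempty := (S.nonemp 0).prod (S.nonemp 1)
  have hcont : Continuous (fun p : (ℝ × ℝ) × (ℝ × ℝ) => dist p.1 p.2) :=
    Continuous.dist continuous_fst continuous_snd
  obtain ⟨z, hz, hzmin⟩ := hcpt.exists_isMinOn hne hcont.continuousOn
  refine ⟨dist z.1 z.2, ?_, ?_⟩
  · rw [dist_pos]
    intro heq
    have h1 : z.1 ∈ S.K 0 := (Set.mem_prod.1 hz).1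
    have h2 : z.2 ∈ S.K 1 := (Set.mem_prod.1 hz).2
    rw [heq] at h1
    exact S.disj.ne_of_mem h1 h2 rfl
  · intro p hp q hq
    exact isMinOn_iff.1 hzmin (p, q) ⟨hp, hq⟩

/-- the family for Zorn's lemma -/
def Fam : Set (Set (ℝ × ℝ)) :=
  {L | L ⊆ S.Lam ∧ IsCompact L ∧ S.Phi '' L = L ∧ ∀ s : ℤ → Fin 2, ∃ x ∈ L, S.pim x = s}

lemma Lam_mem_Fam : S.Lam ∈ S.Fam :=
  ⟨Subset.rfl, S.Lam_cpt, S.Lam_inv, S.pim_surj⟩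

lemma Fam_chain (c : Set (Set (ℝ × ℝ))) (hcsub : c ⊆ S.Fam) (hchain : IsChain (· ⊆ ·) c)
    (hcne : c.Nonempty) : ∃ lb ∈ S.Fam, ∀ L ∈ c, lb ⊆ L := by
  haveI : Nonempty ↥c := hcne.to_subtype
  obtain ⟨L0, hL0⟩ := hcne
  have hLam : ∀ L ∈ c, L ⊆ S.Lam := fun L hL => (hcsub hL).1
  have hcl : ∀ L ∈ c, IsClosed L := fun L hL => (hcsub hL).2.1.isClosed
  have hIsub : ⋂₀ c ⊆ S.Lam := (sInter_subset_of_mem hL0).trans (hLam L0 hL0)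
  have hIcl : IsClosed (⋂₀ c) := isClosed_sInter hcl
  have hIcpt : IsCompact (⋂₀ c) := S.Lam_cpt.of_isClosed_subset hIcl hIsub
  -- directedness machinery
  have hdir : ∀ (E : Set (ℝ × ℝ) → Set (ℝ × ℝ)),
      (∀ L L' , L ⊆ L' → E L ⊆ E L') → Directed (· ⊇ ·) (fun L : ↥c => E L.1) := by
    intro E hmono L1 L2
    rcases hchain.total L1.2 L2.2 with h | h
    · exact ⟨L1, Subset.rfl, hmono _ _ h⟩
    · exact ⟨L2, hmono _ _ h, Subset.rfl⟩
  refine ⟨⋂₀ c, ⟨hIsub, hIcpt, ?_, ?_⟩, fun L hL => sInter_subset_of_mem hL⟩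
  · -- invariance
    apply Set.Subset.antisymm
    · rintro _ ⟨x, hx, rfl⟩
      intro L hL
      rw [← (hcsub hL).2.2.1]
      exact mem_image_of_mem _ (hx L hL)
    · intro x hx
      set E : Set (ℝ × ℝ) → Set (ℝ × ℝ) := fun L => L ∩ S.Phi ⁻¹' {x} with hE
      have hEcl : ∀ L ∈ c, IsClosed (E L) := fun L hL =>
        (S.cont.mono ((hLam L hL).trans S.Lam_sub_X)).preimage_isClosed_of_isClosed
          (hcl L hL) isClosed_singleton
      have hEcpt : ∀ L ∈ c, IsCompact (E L) := fun L hL =>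
        (hcsub hL).2.1.of_isClosed_subset (hEcl L hL) inter_subset_left
      have hEne : ∀ L ∈ c, (E L).Nonempty := by
        intro L hL
        have : x ∈ S.Phi '' L := by rw [(hcsub hL).2.2.1]; exact hx L hL
        obtain ⟨y, hy, hyx⟩ := this
        exact ⟨y, hy, by simpa using hyx⟩
      obtain ⟨y, hy⟩ := IsCompact.nonempty_iInter_of_directed_nonempty_isCompact_isClosed
        (fun L : ↥c => E L.1)
        (hdir E (fun L L' h => inter_subset_inter_left _ h))
        (fun L => hEne L.1 L.2) (fun L => hEcpt L.1 L.2) (fun L => hEcl L.1 L.2)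
      have hy' := mem_iInter.1 hy
      refine ⟨y, mem_sInter.2 fun L hL => (hy' ⟨L, hL⟩).1, by simpa using (hy' ⟨L0, hL0⟩).2⟩
  · -- surjectivity of pim
    intro s
    set E : Set (ℝ × ℝ) → Set (ℝ × ℝ) := fun L => L ∩ S.pim ⁻¹' {s} with hE
    have hEcl : ∀ L ∈ c, IsClosed (E L) := fun L hL =>
      (S.contOn_pim.mono (hLam L hL)).preimage_isClosed_of_isClosed
        (hcl L hL) isClosed_singleton
    have hEcpt : ∀ L ∈ c, IsCompact (E L) := fun L hL =>
      (hcsub hL).2.1.of_isClosed_subset (hEcl L hL) inter_subset_left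
    have hEne : ∀ L ∈ c, (E L).Nonempty := by
      intro L hL
      obtain ⟨y, hy, hys⟩ := (hcsub hL).2.2.2 s
      exact ⟨y, hy, by simpa using hys⟩
    obtain ⟨y, hy⟩ := IsCompact.nonempty_iInter_of_directed_nonempty_isCompact_isClosed
      (fun L : ↥c => E L.1)
      (hdir E (fun L L' h => inter_subset_inter_left _ h))
      (fun L => hEne L.1 L.2) (fun L => hEcpt L.1 L.2) (fun L => hEcl L.1 L.2)
    have hy' := mem_iInter.1 hy
    refine ⟨y, mem_sInter.2 fun L hL => (hy' ⟨L, hL⟩).1, by simpa using (hy' ⟨L0, hL0⟩).2⟩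

/-- surjectivity of `pim` descends to cores -/
lemma core_pim_surj {S0 : Set (ℝ × ℝ)} (h0 : IsCompact S0) (hsub : S0 ⊆ S.Lam)
    (hm : MapsTo S.Phi S0 S0) (hsurj : ∀ s : ℤ → Fin 2, ∃ x ∈ S0, S.pim x = s) :
    ∀ s : ℤ → Fin 2, ∃ x ∈ S.core S0, S.pim x = s := by
  have hsubLp : S0 ⊆ S.Lp := hsub.trans S.Lam_sub_Lp
  have step1 : ∀ n : ℕ, ∀ s : ℤ → Fin 2, ∃ x ∈ S.Phi^[n] '' S0, S.pim x = s := by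
    intro n
    induction n with
    | zero => intro s; simpa using hsurj s
    | succ n ih =>
      intro s
      obtain ⟨x, hx, hpx⟩ := ih (fun i => s (i - 1))
      have hxS0 : x ∈ S0 := core_img_sub S hm n hx
      refine ⟨S.Phi x, ?_, ?_⟩
      · obtain ⟨z, hz, rfl⟩ := hx
        exact ⟨z, hz, by rw [Function.iterate_succ_apply']⟩
      · rw [S.pim_Phi (hsub hxS0), hpx]
        funext i
        show s ((i + 1) - 1) = s i
        congr 1
        ring
  intro s
  set E : ℕ → Set (ℝ × ℝ) := fun n => (S.Phi^[n] '' S0) ∩ S.pim ⁻¹' {s} with hE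
  have hEcl : ∀ n, IsClosed (E n) := fun n =>
    (S.contOn_pim.mono ((core_img_sub S hm n).trans hsub)).preimage_isClosed_of_isClosed
      (core_img_cpt S h0 hsubLp n).isClosed isClosed_singleton
  have hEcpt : ∀ n, IsCompact (E n) := fun n =>
    (core_img_cpt S h0 hsubLp n).of_isClosed_subset (hEcl n) inter_subset_left
  have hEanti : ∀ n, E (n + 1) ⊆ E n := fun n =>
    inter_subset_inter_left _ (core_img_anti S hm n)
  have hEne : ∀ n, (E n).Nonempty := by
    intro n
    obtain ⟨x, hx, hpx⟩ := step1 n s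
    exact ⟨x, hx, by simpa using hpx⟩
  obtain ⟨y, hy⟩ := IsCompact.nonempty_iInter_of_sequence_nonempty_isCompact_isClosed E
    hEanti hEne (hEcpt 0) hEcl
  have hy' := mem_iInter.1 hy
  exact ⟨y, mem_iInter.2 fun n => (hy' n).1, by simpa using (hy' 0).2⟩

end ChaosSetup

namespace ChaosSetup
variable (S : ChaosSetup)

/-- key escape lemma using minimality -/
lemma escape {M : Set (ℝ × ℝ)} (hMF : M ∈ S.Fam)
    (hmin : ∀ L ∈ S.Fam, L ⊆ M → L = M) {W : Set (ℝ × ℝ)} (hW : IsOpen W)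
    (hWM : (W ∩ M).Nonempty) :
    ∀ q ∈ M, ∀ m : ℕ, S.pim q = bshift^[m] tpt → ∃ n, 1 ≤ n ∧ S.Phi^[n] q ∈ W ∩ M := by
  obtain ⟨hMLam, hMcpt, hMinv, hMsurj⟩ := hMF
  have hMmapsTo : MapsTo S.Phi M M := fun x hx => hMinv ▸ mem_image_of_mem _ hx
  have hMiter : ∀ n, MapsTo S.Phi^[n] M M := fun n => hMmapsTo.iterate n
  have hMcont : ∀ n, ContinuousOn S.Phi^[n] M :=
    fun n => contOn_iterate S.cont (hMLam.trans S.Lam_sub_X) hMmapsTo n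
  set XW : Set (ℝ × ℝ) := ⋂ n : ℕ, (M ∩ S.Phi^[n + 1] ⁻¹' Wᶜ) with hXW
  have hXWmem : ∀ y, y ∈ XW ↔ y ∈ M ∧ ∀ n : ℕ, S.Phi^[n + 1] y ∉ W := by
    intro y
    simp only [hXW, mem_iInter, mem_inter_iff, mem_preimage, mem_compl_iff]
    constructor
    · intro h; exact ⟨(h 0).1, fun n => (h n).2⟩
    · intro h n; exact ⟨h.1, h.2 n⟩
  have hXWcl : IsClosed XW := by
    refine isClosed_iInter fun n => ?_
    exact (hMcont (n + 1)).preimage_isClosed_of_isClosed hMcpt.isClosed hW.isClosed_compl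
  have hXWsubM : XW ⊆ M := fun y hy => ((hXWmem y).1 hy).1
  have hXWcpt : IsCompact XW := hMcpt.of_isClosed_subset hXWcl hXWsubM
  have hXWmaps : MapsTo S.Phi XW XW := by
    intro y hy
    rw [hXWmem] at hy ⊢
    refine ⟨hMmapsTo hy.1, fun n => ?_⟩
    rw [← Function.iterate_succ_apply]
    exact hy.2 (n + 1)
  -- pim is not surjective on XW
  have hnotsurj : ¬ (∀ s : ℤ → Fin 2, ∃ x ∈ XW, S.pim x = s) := by
    intro hsurj
    have hcoreF : S.core XW ∈ S.Fam := by
      refine ⟨(core_sub S hXWmaps).trans (hXWsubM.trans hMLam), ?_, ?_, ?_⟩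
      · exact core_cpt S hXWcpt ((hXWsubM.trans hMLam).trans S.Lam_sub_Lp)
      · exact core_inv S hXWcpt ((hXWsubM.trans hMLam).trans S.Lam_sub_Lp) hXWmaps
      · exact core_pim_surj S hXWcpt (hXWsubM.trans hMLam) hXWmaps hsurj
    have hcoreM : S.core XW = M := hmin _ hcoreF ((core_sub S hXWmaps).trans hXWsubM)
    have hMXW : M ⊆ XW := hcoreM ▸ core_sub S hXWmaps
    obtain ⟨w, hwW, hwM⟩ := hWM
    obtain ⟨w₁, hw₁, hw₁w⟩ : ∃ w₁ ∈ M, S.Phi w₁ = w := by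
      rw [← hMinv] at hwM
      obtain ⟨w₁, h1, h2⟩ := hwM
      exact ⟨w₁, h1, h2⟩
    have h01 := ((hXWmem w₁).1 (hMXW hw₁)).2 0
    rw [show (0 + 1) = 1 from rfl, Function.iterate_one, hw₁w] at h01
    exact h01 hwW
  push_neg at hnotsurj
  obtain ⟨s₀, hs₀⟩ := hnotsurj
  set P' : Set (ℤ → Fin 2) := S.pim '' XW with hP'
  have hP'cl : IsClosed P' :=
    (hXWcpt.image_of_continuousOn (S.contOn_pim.mono (hXWsubM.trans hMLam))).isClosed
  have hP'inv : ∀ u ∈ P', bshift u ∈ P' := by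
    rintro _ ⟨y, hy, rfl⟩
    exact ⟨S.Phi y, hXWmaps hy, S.pim_Phi (hMLam (hXWsubM hy))⟩
  have hP'ne : P' ≠ univ := by
    intro h
    have : s₀ ∈ P' := h ▸ mem_univ s₀
    obtain ⟨x, hx, hxs⟩ := this
    exact hs₀ x hx hxs
  intro q hq m hqm
  have hqnot : S.pim q ∉ P' := hqm ▸ tpt_avoid P' hP'cl hP'inv hP'ne m
  have hqXW : q ∉ XW := fun h => hqnot ⟨q, h, rfl⟩
  rw [hXWmem] at hqXW
  push_neg at hqXW
  obtain ⟨n, hn⟩ := hqXW hq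
  refine ⟨n + 1, by omega, ?_, hMiter (n + 1) hq⟩
  by_contra h
  exact h (by simpa using hn)

end ChaosSetup

namespace ChaosSetup
variable (S : ChaosSetup)

theorem main : ∃ Λ : Set (ℝ × ℝ), IsCompact Λ ∧ Λ ⊆ S.X ∧ S.Phi '' Λ = Λ ∧
    (∃ π : ℝ × ℝ → (ℤ → Fin 2), ContinuousOn π Λ ∧ π '' Λ = univ ∧
      ∀ x ∈ Λ, π (S.Phi x) = bshift (π x)) ∧
    (∀ U V : Set (ℝ × ℝ), IsOpen U → IsOpen V → (U ∩ Λ).Nonempty → (V ∩ Λ).Nonempty →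
      ∃ n : ℕ, (S.Phi^[n] '' (U ∩ Λ) ∩ (V ∩ Λ)).Nonempty) ∧
    (∃ δ : ℝ, 0 < δ ∧ ∀ x ∈ Λ, ∀ ε : ℝ, 0 < ε →
      ∃ y ∈ Λ, dist x y < ε ∧ ∃ n : ℕ, δ ≤ dist (S.Phi^[n] x) (S.Phi^[n] y)) := by
  obtain ⟨M, hMsubLam, hMmin⟩ :=
    zorn_superset_nonempty S.Fam (S.Fam_chain) S.Lam S.Lam_mem_Fam
  have hMF : M ∈ S.Fam := hMmin.1
  have hmin : ∀ L ∈ S.Fam, L ⊆ M → L = M :=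
    fun L hL hsub => Set.Subset.antisymm hsub (hMmin.2 hL hsub)
  obtain ⟨hMLam, hMcpt, hMinv, hMsurj⟩ := hMF
  have hMF' : M ∈ S.Fam := ⟨hMLam, hMcpt, hMinv, hMsurj⟩
  have hMmapsTo : MapsTo S.Phi M M := fun x hx => hMinv ▸ mem_image_of_mem _ hx
  have hMiter : ∀ n, MapsTo S.Phi^[n] M M := fun n => hMmapsTo.iterate n
  have hpim_iter : ∀ x ∈ M, ∀ n : ℕ, S.pim (S.Phi^[n] x) = bshift^[n] (S.pim x) :=
    fun x hx n => S.pim_Phi_iter (hMLam hx) n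
  refine ⟨M, hMcpt, hMLam.trans S.Lam_sub_X, hMinv, ?_, ?_, ?_⟩
  · -- semi-conjugacy
    refine ⟨S.pim, S.contOn_pim.mono hMLam, ?_, fun x hx => S.pim_Phi (hMLam hx)⟩
    apply Set.Subset.antisymm (subset_univ _)
    intro s _
    obtain ⟨x, hx, hxs⟩ := hMsurj s
    exact ⟨x, hx, hxs⟩
  · -- transitivity
    intro U V hU hV hUM hVM
    obtain ⟨p, hp, hptpt⟩ := hMsurj tpt
    obtain ⟨a, ha1, haU⟩ := S.escape hMF' hmin hU hUM p hp 0 (by simpa using hptpt)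
    set q := S.Phi^[a] p with hq
    have hqM : q ∈ M := haU.2
    have hqpim : S.pim q = bshift^[a] tpt := by
      rw [hq, hpim_iter p hp a, hptpt]
    obtain ⟨b, hb1, hbV⟩ := S.escape hMF' hmin hV hVM q hqM a hqpim
    refine ⟨b, S.Phi^[b] q, ?_, ?_⟩
    · exact mem_image_of_mem _ ⟨haU.1, hqM⟩
    · exact ⟨hbV.1, hbV.2⟩
  · -- sensitivity
    obtain ⟨δ, hδpos, hδ⟩ := S.dist_sep
    refine ⟨δ, hδpos, ?_⟩
    intro x hx ε hε
    have hsep : ∀ y ∈ M, ∀ n : ℕ, S.pim y n ≠ S.pim x n →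
        δ ≤ dist (S.Phi^[n] x) (S.Phi^[n] y) := by
      intro y hy n hne
      have hz1 : S.Phi^[n] x ∈ S.X := S.Lam_sub_X (S.Lam_iter_mapsTo n (hMLam hx))
      have hz2 : S.Phi^[n] y ∈ S.X := S.Lam_sub_X (S.Lam_iter_mapsTo n (hMLam hy))
      have hne' : S.itin (S.Phi^[n] x) ≠ S.itin (S.Phi^[n] y) := by
        rw [← S.pim_nonneg, ← S.pim_nonneg]
        exact fun h => hne (by rw [S.pim_nonneg, S.pim_nonneg] at h; exact
          (by rw [S.pim_nonneg y n, S.pim_nonneg x n]; exact h.symm))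
      rcases S.itin_ne hz1 hz2 hne' with ⟨h1, h2⟩ | ⟨h1, h2⟩
      · exact hδ _ h1 _ h2
      · rw [dist_comm]
        exact hδ _ h2 _ h1
    set W : Set (ℝ × ℝ) := Metric.ball x ε with hWdef
    have hWM : (W ∩ M).Nonempty := ⟨x, Metric.mem_ball_self hε, hx⟩
    obtain ⟨p, hp, hptpt⟩ := hMsurj tpt
    obtain ⟨m₁, hm₁1, hm₁W⟩ :=
      S.escape hMF' hmin Metric.isOpen_ball hWM p hp 0 (by simpa using hptpt)
    set y₁ := S.Phi^[m₁] p with hy₁def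
    have hy₁M : y₁ ∈ M := hm₁W.2
    have hy₁pim : S.pim y₁ = bshift^[m₁] tpt := by rw [hy₁def, hpim_iter p hp m₁, hptpt]
    obtain ⟨k, hk1, hkW⟩ :=
      S.escape hMF' hmin Metric.isOpen_ball hWM y₁ hy₁M m₁ hy₁pim
    set y₂ := S.Phi^[k] y₁ with hy₂def
    have hy₂M : y₂ ∈ M := hkW.2
    set m₂ := k + m₁ with hm₂def
    have hy₂pim : S.pim y₂ = bshift^[m₂] tpt := by
      rw [hy₂def, hpim_iter y₁ hy₁M k, hy₁pim, hm₂def, Function.iterate_add_apply]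
    by_cases hd1 : ∃ n : ℕ, S.pim y₁ n ≠ S.pim x n
    · obtain ⟨n, hn⟩ := hd1
      refine ⟨y₁, hy₁M, ?_, n, hsep y₁ hy₁M n hn⟩
      have : y₁ ∈ W := hm₁W.1
      rw [hWdef] at this
      rw [dist_comm]
      exact Metric.mem_ball.1 this
    by_cases hd2 : ∃ n : ℕ, S.pim y₂ n ≠ S.pim x n
    · obtain ⟨n, hn⟩ := hd2
      refine ⟨y₂, hy₂M, ?_, n, hsep y₂ hy₂M n hn⟩
      have : y₂ ∈ W := hkW.1
      rw [hWdef] at this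
      rw [dist_comm]
      exact Metric.mem_ball.1 this
    -- contradiction case
    exfalso
    push_neg at hd1 hd2
    set u : ℕ → Fin 2 := fun n => S.pim x n with hu
    have h1 : ∀ n : ℕ, tpt ((n : ℤ) + m₁) = u n := by
      intro n
      have := hd1 n
      rw [hy₁pim, bshift_iter] at this
      exact this
    have h2 : ∀ n : ℕ, tpt ((n : ℤ) + m₂) = u n := by
      intro n
      have := hd2 n
      rw [hy₂pim, bshift_iter] at this
      exact this
    have per : ∀ n : ℕ, u (n + k) = u n := by
      intro n
      have ha : ((n + k : ℕ) : ℤ) + m₁ = (n : ℤ) + m₂ := by push_cast; omega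
      rw [← h1 (n + k), ha, h2 n]
    have key : ∀ v : Fin 2, u 0 = v := by
      intro v
      obtain ⟨n₀, hn₀M, hn₀⟩ := tpt_dense (fun _ => v) k m₁
      set c : ℕ := n₀ - m₁ with hc
      have win : ∀ i, i < k → u (c + i) = v := by
        intro i hi
        have harg : ((c + i : ℕ) : ℤ) + m₁ = (i : ℤ) + n₀ := by push_cast; omega
        rw [← h1 (c + i), harg]
        have := hn₀ (i : ℤ) (by simpa using le_of_lt hi)
        rw [bshift_iter] at this
        exact this
      exact periodic_forcing hk1 per v win
    have h0 := key 0
    have h1' := key 1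
    rw [h0] at h1'
    exact absurd h1' (by decide)

end ChaosSetup

lemma sides_disjoint (R : OrientedRectangle) : Disjoint R.left R.right := by
  rw [Set.disjoint_left]
  rintro p ⟨a, ha, rfl⟩ ⟨b, hb, hab⟩
  have haU : a ∈ unitSq := by
    refine ⟨?_, ha.2⟩
    rw [show a.1 = 0 from ha.1]
    exact ⟨le_refl _, zero_le_one⟩
  have hbU : b ∈ unitSq := by
    refine ⟨?_, hb.2⟩
    rw [show b.1 = 1 from hb.1]
    exact ⟨zero_le_one, le_refl _⟩
  have : b = a := R.inj hbU haU hab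
  rw [← this] at ha
  have h1 : b.1 = 1 := hb.1
  have h0 : b.1 = 0 := ha.1
  rw [h0] at h1
  norm_num at h1

lemma left_nonempty_mem (R : OrientedRectangle) : R.h (0, 0) ∈ R.left :=
  ⟨(0, 0), ⟨rfl, ⟨le_refl _, zero_le_one⟩⟩, rfl⟩

lemma right_nonempty_mem (R : OrientedRectangle) : R.h (1, 0) ∈ R.right :=
  ⟨(1, 0), ⟨rfl, ⟨le_refl _, zero_le_one⟩⟩, rfl⟩

/-- composition of stretching relations -/
lemma stretch_comp {K₁ K₂ : Set (ℝ × ℝ)} {F₁ F₂ : ℝ × ℝ → ℝ × ℝ}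
    {A B C : OrientedRectangle} (h₁ : StretchesTo K₁ F₁ A B)
    (h₂ : StretchesTo K₂ F₂ B C) :
    StretchesTo (K₁ ∩ F₁ ⁻¹' K₂) (F₂ ∘ F₁) A C := by
  obtain ⟨h₁cpt, h₁sub, h₁cont, h₁str⟩ := h₁
  obtain ⟨h₂cpt, h₂sub, h₂cont, h₂str⟩ := h₂
  have hKcl : IsClosed (K₁ ∩ F₁ ⁻¹' K₂) :=
    h₁cont.preimage_isClosed_of_isClosed h₁cpt.isClosed h₂cpt.isClosed
  refine ⟨h₁cpt.of_isClosed_subset hKcl inter_subset_left,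
    inter_subset_left.trans h₁sub,
    h₂cont.comp (h₁cont.mono inter_subset_left) (fun x hx => hx.2), ?_⟩
  intro γ hγc hγm hγcross
  obtain ⟨t', t'', ht'I, ht''I, htle, hK₁, hB, hcrossB⟩ := h₁str γ hγc hγm hγcross
  have htlt : t' < t'' := by
    rcases lt_or_eq_of_le htle with h | h
    · exact h
    · exfalso
      rcases hcrossB with ⟨hl, hr⟩ | ⟨hr, hl⟩
      · rw [h] at hl
        exact Set.disjoint_left.1 (sides_disjoint B) hl hr
      · rw [h] at hr
        exact Set.disjoint_left.1 (sides_disjoint B) hl hr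
  set L : ℝ → ℝ := fun τ => t' + τ * (t'' - t') with hL
  have hLmem : ∀ τ ∈ Icc (0:ℝ) 1, L τ ∈ Icc t' t'' := by
    intro τ hτ
    constructor
    · have : 0 ≤ τ * (t'' - t') := mul_nonneg hτ.1 (by linarith)
      simp only [hL]; linarith
    · have : τ * (t'' - t') ≤ 1 * (t'' - t') :=
        mul_le_mul_of_nonneg_right hτ.2 (by linarith)
      simp only [hL]; linarith
  have hIccsub : Icc t' t'' ⊆ Icc (0:ℝ) 1 := Icc_subset_Icc ht'I.1 ht''I.2
  set η : ℝ → ℝ × ℝ := fun τ => F₁ (γ (L τ)) with hη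
  have hηc : ContinuousOn η (Icc (0:ℝ) 1) := by
    apply h₁cont.comp
    · exact (hγc.mono hIccsub).comp (Continuous.continuousOn (by continuity)) hLmem
    · intro τ hτ
      exact hK₁ _ (hLmem τ hτ)
  have hηm : MapsTo η (Icc (0:ℝ) 1) B.carrier := fun τ hτ => hB _ (hLmem τ hτ)
  have hL0 : L 0 = t' := by simp [hL]
  have hL1 : L 1 = t'' := by simp [hL]
  have hηcross : (η 0 ∈ B.left ∧ η 1 ∈ B.right) ∨ (η 0 ∈ B.right ∧ η 1 ∈ B.left) := by
    simp only [hη, hL0, hL1]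
    exact hcrossB
  obtain ⟨u', u'', hu'I, hu''I, hule, hK₂, hC, hcrossC⟩ := h₂str η hηc hηm hηcross
  refine ⟨L u', L u'', hIccsub (hLmem u' hu'I), hIccsub (hLmem u'' hu''I), ?_, ?_, ?_, ?_⟩
  · simp only [hL]
    have : u' * (t'' - t') ≤ u'' * (t'' - t') :=
      mul_le_mul_of_nonneg_right hule (by linarith)
    linarith
  · intro t ht
    set τ : ℝ := (t - t') / (t'' - t') with hτdef
    have hne : t'' - t' ≠ 0 := by linarith
    have hLτ : L τ = t := by
      simp only [hL, hτdef]
      rw [div_mul_cancel₀ _ hne]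
      ring
    have hτmem : τ ∈ Icc u' u'' := by
      constructor
      · rw [hτdef, le_div_iff₀ (by linarith)]
        have := ht.1
        simp only [hL] at this
        linarith
      · rw [hτdef, div_le_iff₀ (by linarith)]
        have := ht.2
        simp only [hL] at this
        linarith
    have h1 := hK₂ τ hτmem
    simp only [hη, hLτ] at h1
    have h2 : t ∈ Icc t' t'' := by
      have h1' := hLmem u' hu'I
      have h2' := hLmem u'' hu''I
      exact ⟨le_trans h1'.1 ht.1, le_trans ht.2 h2'.2⟩
    exact ⟨hK₁ _ h2, h1⟩
  · intro t ht
    set τ : ℝ := (t - t') / (t'' - t') with hτdef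
    have hne : t'' - t' ≠ 0 := by linarith
    have hLτ : L τ = t := by
      simp only [hL, hτdef]
      rw [div_mul_cancel₀ _ hne]
      ring
    have hτmem : τ ∈ Icc u' u'' := by
      constructor
      · rw [hτdef, le_div_iff₀ (by linarith)]
        have := ht.1
        simp only [hL] at this
        linarith
      · rw [hτdef, div_le_iff₀ (by linarith)]
        have := ht.2
        simp only [hL] at this
        linarith
    have h1 := hC τ hτmem
    simp only [hη, hLτ] at h1
    exact h1
  · have e1 : (F₂ ∘ F₁) (γ (L u')) = F₂ (η u') := by simp [hη]
    have e2 : (F₂ ∘ F₁) (γ (L u'')) = F₂ (η u'') := by simp [hη]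
    rw [e1, e2]
    exact hcrossC

section CrossSets
variable (Φ : ℝ × ℝ → ℝ × ℝ) (K : Fin 2 → Set (ℝ × ℝ)) (A : OrientedRectangle)

/-- iterated crossing sets -/
def crossSet (w : ℕ → Fin 2) : ℕ → Set (ℝ × ℝ)
  | 0 => K (w 0)
  | n + 1 => K (w 0) ∩ Φ ⁻¹' (crossSet (fun j => w (j + 1)) n)

lemma crossSet_stretch (hK : ∀ i, StretchesTo (K i) Φ A A) :
    ∀ (n : ℕ) (w : ℕ → Fin 2), StretchesTo (crossSet Φ K w n) (Φ^[n + 1]) A A := by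
  intro n
  induction n with
  | zero =>
    intro w
    have := hK (w 0)
    rw [show Φ^[0 + 1] = Φ from funext fun x => by simp]
    exact this
  | succ n ih =>
    intro w
    have hcomp := stretch_comp (hK (w 0)) (ih (fun j => w (j + 1)))
    rw [show Φ^[n + 1 + 1] = Φ^[n + 1] ∘ Φ from Function.iterate_succ Φ (n + 1)]
    exact hcomp

lemma crossSet_mem : ∀ (n : ℕ) (w : ℕ → Fin 2) (x : ℝ × ℝ),
    x ∈ crossSet Φ K w n → ∀ j ≤ n, Φ^[j] x ∈ K (w j) := by
  intro n
  induction n with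
  | zero =>
    intro w x hx j hj
    interval_cases j
    simpa [crossSet] using hx
  | succ n ih =>
    intro w x hx j hj
    match j with
    | 0 => simpa using hx.1
    | j + 1 =>
      rw [Function.iterate_succ_apply]
      exact ih _ _ hx.2 j (by omega)

lemma crossSet_nonempty (hK : ∀ i, StretchesTo (K i) Φ A A) (w : ℕ → Fin 2) (n : ℕ) :
    (crossSet Φ K w n).Nonempty := by
  obtain ⟨-, -, -, hstr⟩ := crossSet_stretch Φ K A hK n w
  set γ : ℝ → ℝ × ℝ := fun s => A.h (s, 0) with hγ
  have hγc : ContinuousOn γ (Icc 0 1) := by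
    apply A.cont.comp (Continuous.continuousOn (by continuity))
    intro s hs
    exact ⟨hs, ⟨le_refl _, zero_le_one⟩⟩
  have hγm : MapsTo γ (Icc (0:ℝ) 1) A.carrier := by
    intro s hs
    exact ⟨(s, 0), ⟨hs, ⟨le_refl _, zero_le_one⟩⟩, rfl⟩
  have hγcross : (γ 0 ∈ A.left ∧ γ 1 ∈ A.right) ∨ (γ 0 ∈ A.right ∧ γ 1 ∈ A.left) :=
    Or.inl ⟨left_nonempty_mem A, right_nonempty_mem A⟩
  obtain ⟨t', t'', _, _, htle, hKmem, -, -⟩ := hstr γ hγc hγm hγcross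
  exact ⟨γ t', hKmem t' ⟨le_refl _, htle⟩⟩

end CrossSets


/-- Under hypotheses (H), there is a compact `Φ`-invariant set `Λ ⊆ H` on which `Φ` is
semi-conjugate to the two-sided Bernoulli shift on two symbols, topologically transitive, and
has sensitive dependence on initial conditions. -/
theorem statement3
    (F G : ℝ × ℝ → ℝ × ℝ) (DF DG : Set (ℝ × ℝ))
    (A B : OrientedRectangle)
    (H0 H1 : Set (ℝ × ℝ))
    (hdisj : Disjoint H0 H1)
    (hH0 : H0 ⊆ A.carrier ∩ DF) (hH1 : H1 ⊆ A.carrier ∩ DF)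
    (hCF0 : StretchesTo H0 F A B) (hCF1 : StretchesTo H1 F A B)
    (hBDG : B.carrier ⊆ DG)
    (hCG : StretchesTo B.carrier G B A)
    (Φ : ℝ × ℝ → ℝ × ℝ) (hΦ : Φ = G ∘ F)
    (Hset : Set (ℝ × ℝ)) (hHset : Hset = (H0 ∪ H1) ∩ F ⁻¹' B.carrier)
    (hcont : ContinuousOn Φ Hset) (hinj : InjOn Φ Hset) :
    ∃ Λ : Set (ℝ × ℝ), IsCompact Λ ∧ Λ ⊆ Hset ∧ Φ '' Λ = Λ ∧
      -- semi-conjugacy to the two-sided Bernoulli shift on two symbols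
      (∃ π : ℝ × ℝ → (ℤ → Fin 2), ContinuousOn π Λ ∧ π '' Λ = univ ∧
        ∀ x ∈ Λ, π (Φ x) = bshift (π x)) ∧
      -- topological transitivity on Λ
      (∀ U V : Set (ℝ × ℝ), IsOpen U → IsOpen V → (U ∩ Λ).Nonempty → (V ∩ Λ).Nonempty →
        ∃ n : ℕ, (Φ^[n] '' (U ∩ Λ) ∩ (V ∩ Λ)).Nonempty) ∧
      -- sensitive dependence on initial conditions on Λ
      (∃ δ : ℝ, 0 < δ ∧ ∀ x ∈ Λ, ∀ ε : ℝ, 0 < ε →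
        ∃ y ∈ Λ, dist x y < ε ∧ ∃ n : ℕ, δ ≤ dist (Φ^[n] x) (Φ^[n] y)) := by
  set K : Fin 2 → Set (ℝ × ℝ) :=
    ![H0 ∩ F ⁻¹' B.carrier, H1 ∩ F ⁻¹' B.carrier] with hK
  have hK0 : K 0 = H0 ∩ F ⁻¹' B.carrier := rfl
  have hK1 : K 1 = H1 ∩ F ⁻¹' B.carrier := rfl
  have hStretch : ∀ i, StretchesTo (K i) Φ A A := by
    intro i
    fin_cases i
    · have hcomp := stretch_comp hCF0 hCG
      rw [← hΦ] at hcomp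
      exact hcomp
    · have hcomp := stretch_comp hCF1 hCG
      rw [← hΦ] at hcomp
      exact hcomp
  have hXeq : K 0 ∪ K 1 = Hset := by
    rw [hK0, hK1, hHset, Set.union_inter_distrib_right]
  have hcross : ∀ w : ℕ → Fin 2, ∀ n : ℕ, ∃ x, ∀ j ≤ n, Φ^[j] x ∈ K (w j) := by
    intro w n
    obtain ⟨x, hx⟩ := crossSet_nonempty Φ K A hStretch w n
    exact ⟨x, crossSet_mem Φ K n w x hx⟩
  set S : ChaosSetup :=
    { Phi := Φ
      K := K
      cpt := fun i => (hStretch i).1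
      nonemp := fun i => by
        obtain ⟨x, hx⟩ := hcross (fun _ => i) 0
        exact ⟨x, by simpa using hx 0 le_rfl⟩
      disj := hdisj.mono inter_subset_left inter_subset_left
      cont := by rw [show K 0 ∪ K 1 = Hset from hXeq]; exact hcont
      inj := by rw [show K 0 ∪ K 1 = Hset from hXeq]; exact hinj
      cross := hcross } with hS
  obtain ⟨Λ, h1, h2, h3, h4, h5, h6⟩ := S.main
  refine ⟨Λ, h1, ?_, h3, h4, h5, h6⟩
  rw [← hXeq]
  exact h2
end
end

section
/- Let F: D_F ⊆ ℝ² → ℝ² and G: D_G ⊆ ℝ² → ℝ² be maps and let à = (A, A⁻), B̃ = (B, B⁻) be oriented rectangles of ℝ². Assume (C_F): there exist two disjoint compact sets H₀, H₁ ⊆ A ∩ D_F with (H_i, F): à ⥲ B̃ for i = 0, 1; and (C_G): B ⊆ D_G and G: B̃ ⥲ Ã. Then for each i = 0, 1 the composite map satisfies the stretching relation (H_i ∩ F^{−1}(B), G ∘ F): à ⥲ Ã. -/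
open Set

noncomputable section

lemma unitSq_compact : IsCompact unitSq := isCompact_Icc.prod isCompact_Icc

lemma carrier_compact (R : OrientedRectangle) : IsCompact R.carrier :=
  unitSq_compact.image_of_continuousOn R.cont

/-- Key composition lemma. -/
lemma stretch_comp_s4 (F G : ℝ × ℝ → ℝ × ℝ) (A B : OrientedRectangle) (H : Set (ℝ × ℝ))
    (hCF : StretchesTo H F A B) (hCG : StretchesTo B.carrier G B A) :
    StretchesTo (H ∩ F ⁻¹' B.carrier) (G ∘ F) A A := by
  obtain ⟨hHc, hHA, hFcont, hFstr⟩ := hCF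
  obtain ⟨hBc, -, hGcont, hGstr⟩ := hCG
  have hKclosed : IsClosed (H ∩ F ⁻¹' B.carrier) :=
    hFcont.preimage_isClosed_of_isClosed hHc.isClosed (carrier_compact B).isClosed
  have hKsub : H ∩ F ⁻¹' B.carrier ⊆ H := inter_subset_left
  refine ⟨hHc.of_isClosed_subset hKclosed hKsub, hKsub.trans hHA, ?_, ?_⟩
  · exact hGcont.comp (hFcont.mono hKsub) fun x hx => hx.2
  · intro γ hγc hγm hγe
    obtain ⟨t', t'', ht'I, ht''I, hle, hK, hFB, hends⟩ := hFstr γ hγc hγm hγe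
    set c := t'' - t' with hc
    have hc0 : 0 ≤ c := by simp [hc]; linarith
    set aff : ℝ → ℝ := fun s => t' + s * c with haff
    have haffmem : ∀ s ∈ Icc (0:ℝ) 1, aff s ∈ Icc t' t'' := by
      intro s hs
      simp only [haff]
      constructor
      · nlinarith [hs.1, hs.2, hc0]
      · nlinarith [hs.1, hs.2, hc0]
    have hsub01 : Icc t' t'' ⊆ Icc (0:ℝ) 1 := Icc_subset_Icc ht'I.1 ht''I.2
    set δ : ℝ → ℝ × ℝ := fun s => F (γ (aff s)) with hδ
    have hδc : ContinuousOn δ (Icc 0 1) := by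
      apply hFcont.comp
      · apply hγc.comp (by fun_prop)
        intro s hs
        exact hsub01 (haffmem s hs)
      · intro s hs
        exact hK _ (haffmem s hs)
    have hδm : MapsTo δ (Icc (0:ℝ) 1) B.carrier := fun s hs => hFB _ (haffmem s hs)
    have haff0 : aff 0 = t' := by simp [haff]
    have haff1 : aff 1 = t'' := by simp [haff, hc]
    have hδe : ((δ 0 ∈ B.left ∧ δ 1 ∈ B.right) ∨ (δ 0 ∈ B.right ∧ δ 1 ∈ B.left)) := by
      simpa [hδ, haff0, haff1] using hends
    obtain ⟨s', s'', hs'I, hs''I, hsle, _, hGA, hGe⟩ := hGstr δ hδc hδm hδe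
    refine ⟨aff s', aff s'', hsub01 (haffmem _ hs'I), hsub01 (haffmem _ hs''I),
      by simp only [haff]; nlinarith [hc0, hsle], ?_, ?_, ?_⟩
    · intro t ht
      have ht' : t ∈ Icc t' t'' := by
        have h1 := (haffmem _ hs'I).1
        have h2 := (haffmem _ hs''I).2
        exact ⟨le_trans h1 ht.1, le_trans ht.2 h2⟩
      exact ⟨hK t ht', hFB t ht'⟩
    · intro t ht
      rcases eq_or_lt_of_le hc0 with hceq | hcpos
      · have haffs' : aff s' = t' := by simp [haff, ← hceq]
        have ht'' : t = t' := by
          have h1 := ht.1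
          have h2 := ht.2
          have : aff s'' = t' := by simp [haff, ← hceq]
          rw [haffs'] at h1; rw [this] at h2
          linarith
        have := hGA s' ⟨le_refl _, hsle⟩
        simpa [hδ, haffs', ht'', Function.comp] using this
      · set s := (t - t') / c with hs
        have hsc : s * c = t - t' := by rw [hs, div_mul_cancel₀ _ hcpos.ne']
        have hsmem : s ∈ Icc s' s'' := by
          constructor
          · rw [hs, le_div_iff₀ hcpos]
            have := ht.1
            simp only [haff] at this
            linarith
          · rw [hs, div_le_iff₀ hcpos]
            have := ht.2
            simp only [haff] at this
            linarith
        have haffs : aff s = t := by simp only [haff]; rw [hsc]; ring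
        have := hGA s hsmem
        simpa [hδ, haffs, Function.comp] using this
    · simpa [hδ, Function.comp] using hGe

/-- Under conditions (C_F) and (C_G), the composition `G ∘ F` satisfies the stretching relation
`(H_i ∩ F⁻¹(B), G ∘ F) : Ã ⥲ Ã` for `i = 0, 1`. -/
theorem statement4
    (F G : ℝ × ℝ → ℝ × ℝ) (DF DG : Set (ℝ × ℝ))
    (A B : OrientedRectangle)
    (H0 H1 : Set (ℝ × ℝ))
    (hdisj : Disjoint H0 H1)
    (hH0 : H0 ⊆ A.carrier ∩ DF) (hH1 : H1 ⊆ A.carrier ∩ DF)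
    (hCF0 : StretchesTo H0 F A B) (hCF1 : StretchesTo H1 F A B)
    (hBDG : B.carrier ⊆ DG)
    (hCG : StretchesTo B.carrier G B A) :
    StretchesTo (H0 ∩ F ⁻¹' B.carrier) (G ∘ F) A A ∧
    StretchesTo (H1 ∩ F ⁻¹' B.carrier) (G ∘ F) A A :=
  ⟨stretch_comp_s4 F G A B H0 hCF0 hCG, stretch_comp_s4 F G A B H1 hCF1 hCG⟩
end
end

section
/- The function H is a first integral of system (Z) on the open unit square: for every (u,v) ∈ (0,1)² one has ∂_u H(u,v) · u(1−u)(σv−χ) + ∂_v H(u,v) · (−v(1−v)(ξu−φ)) = 0; consequently, for every differentiable curve t ↦ (u(t), v(t)) with values in (0,1)² that solves (Z) on an interval I, the function t ↦ H(u(t), v(t)) is constant on I. -/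
open Set

noncomputable section

/-- The first integral `H(u,v) = -φ log u + (φ-ξ) log(1-u) - χ log v + (χ-σ) log(1-v)`. -/
def Hfun (σ χ ξ φ : ℝ) (u v : ℝ) : ℝ :=
  -φ * Real.log u + (φ - ξ) * Real.log (1 - u)
  - χ * Real.log v + (χ - σ) * Real.log (1 - v)

/-! `H` splits as `L φ ξ u + L χ σ v` with `L a b x = -a log x + (a - b) log (1 - x)`, and
`L a b` has derivative `(b x - a) / (x (1 - x))`. Hence `∂_u H · u(1-u) = ξu - φ` and
`∂_v H · v(1-v) = σv - χ`, so along the vector field of (Z) the two terms of `dH` are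
`±(ξu - φ)(σv - χ)` and cancel. -/

def logPotential (a b x : ℝ) : ℝ :=
  -a * Real.log x + (a - b) * Real.log (1 - x)

lemma Hfun_eq_logPotential_add (σ χ ξ φ u v : ℝ) :
    Hfun σ χ ξ φ u v = logPotential φ ξ u + logPotential χ σ v := by
  unfold Hfun logPotential
  ring

lemma hasDerivAt_logPotential (a b : ℝ) {x : ℝ} (hx₀ : x ≠ 0) (hx₁ : x ≠ 1) :
    HasDerivAt (logPotential a b) ((b * x - a) / (x * (1 - x))) x := by
  have h1x : 1 - x ≠ 0 := sub_ne_zero.mpr hx₁.symm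
  have hlog : HasDerivAt (fun y => Real.log (1 - y)) (-1 / (1 - x)) x := by
    simpa using ((hasDerivAt_id x).const_sub 1).log h1x
  refine (((Real.hasDerivAt_log hx₀).const_mul (-a)).add (hlog.const_mul (a - b))).congr_deriv ?_
  field_simp
  ring

section FirstIntegral

variable (σ χ ξ φ : ℝ) {u v : ℝ}

lemma hasDerivAt_Hfun_left (hu : u ∈ Ioo (0 : ℝ) 1) :
    HasDerivAt (fun u' => Hfun σ χ ξ φ u' v) ((ξ * u - φ) / (u * (1 - u))) u := by
  simp only [Hfun_eq_logPotential_add]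
  exact (hasDerivAt_logPotential φ ξ hu.1.ne' hu.2.ne).add_const _

lemma hasDerivAt_Hfun_right (hv : v ∈ Ioo (0 : ℝ) 1) :
    HasDerivAt (fun v' => Hfun σ χ ξ φ u v') ((σ * v - χ) / (v * (1 - v))) v := by
  simp only [Hfun_eq_logPotential_add]
  exact (hasDerivAt_logPotential χ σ hv.1.ne' hv.2.ne).const_add _

lemma Hfun_gradient_mul_vectorField (hu : u ∈ Ioo (0 : ℝ) 1) (hv : v ∈ Ioo (0 : ℝ) 1) :
    (ξ * u - φ) / (u * (1 - u)) * (u * (1 - u) * (σ * v - χ))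
      + (σ * v - χ) / (v * (1 - v)) * (-(v * (1 - v) * (ξ * u - φ))) = 0 := by
  have hu' : u * (1 - u) ≠ 0 := (mul_pos hu.1 (sub_pos.mpr hu.2)).ne'
  have hv' : v * (1 - v) ≠ 0 := (mul_pos hv.1 (sub_pos.mpr hv.2)).ne'
  rw [mul_neg, ← mul_assoc (_ / _) (u * (1 - u)), ← mul_assoc (_ / _) (v * (1 - v)),
    div_mul_cancel₀ _ hu', div_mul_cancel₀ _ hv']
  ring

lemma hasDerivAt_Hfun_comp {x y : ℝ → ℝ} {x' y' t : ℝ} (hx : HasDerivAt x x' t)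
    (hy : HasDerivAt y y' t) (hxt : x t ∈ Ioo (0 : ℝ) 1) (hyt : y t ∈ Ioo (0 : ℝ) 1) :
    HasDerivAt (fun s => Hfun σ χ ξ φ (x s) (y s))
      ((ξ * x t - φ) / (x t * (1 - x t)) * x' + (σ * y t - χ) / (y t * (1 - y t)) * y') t := by
  simp only [Hfun_eq_logPotential_add]
  exact ((hasDerivAt_logPotential φ ξ hxt.1.ne' hxt.2.ne).comp t hx).add
    ((hasDerivAt_logPotential χ σ hyt.1.ne' hyt.2.ne).comp t hy)

end FirstIntegral

lemma Convex.eq_of_forall_hasDerivAt_zero {E : Type*} [NormedAddCommGroup E] [NormedSpace ℝ E]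
    {s : Set ℝ} (hs : Convex ℝ s) {f : ℝ → E} (hf : ∀ t ∈ s, HasDerivAt f 0 t) {x y : ℝ}
    (hx : x ∈ s) (hy : y ∈ s) : f x = f y := by
  have h := hs.norm_image_sub_le_of_norm_hasDerivWithin_le (f := f) (f' := fun _ => (0 : E)) (C := 0)
    (fun t ht => (hf t ht).hasDerivWithinAt) (fun _ _ => by simp) hx hy
  rw [zero_mul, norm_le_zero_iff, sub_eq_zero] at h
  exact h.symm

theorem statement5_general (σ χ ξ φ : ℝ) :
    (∀ u v : ℝ, u ∈ Ioo (0:ℝ) 1 → v ∈ Ioo (0:ℝ) 1 →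
      deriv (fun u' => Hfun σ χ ξ φ u' v) u * (u * (1 - u) * (σ * v - χ))
        + deriv (fun v' => Hfun σ χ ξ φ u v') v * (-(v * (1 - v) * (ξ * u - φ))) = 0) ∧
    (∀ I : Set ℝ, I.OrdConnected → ∀ u v : ℝ → ℝ,
      (∀ t ∈ I, u t ∈ Ioo (0:ℝ) 1 ∧ v t ∈ Ioo (0:ℝ) 1) →
      (∀ t ∈ I, HasDerivAt u (u t * (1 - u t) * (σ * v t - χ)) t ∧
                HasDerivAt v (-(v t * (1 - v t) * (ξ * u t - φ))) t) →
      ∀ s ∈ I, ∀ t ∈ I, Hfun σ χ ξ φ (u s) (v s) = Hfun σ χ ξ φ (u t) (v t)) := by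
  refine ⟨fun u v hu hv => ?_, fun I hI u v hmem hode s hs t ht => ?_⟩
  · rw [(hasDerivAt_Hfun_left σ χ ξ φ hu).deriv, (hasDerivAt_Hfun_right σ χ ξ φ hv).deriv]
    exact Hfun_gradient_mul_vectorField σ χ ξ φ hu hv
  · refine hI.convex.eq_of_forall_hasDerivAt_zero (f := fun r => Hfun σ χ ξ φ (u r) (v r))
      (fun r hr => ?_) hs ht
    obtain ⟨hur, hvr⟩ := hmem r hr
    obtain ⟨hu', hv'⟩ := hode r hr
    exact (hasDerivAt_Hfun_comp σ χ ξ φ hu' hv' hur hvr).congr_deriv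
      (Hfun_gradient_mul_vectorField σ χ ξ φ hur hvr)

/-- `H` is a first integral of system (Z) on the open unit square: the gradient of `H` is
orthogonal to the vector field, and `H` is constant along every solution of (Z) with values in
`(0,1)²` defined on an interval. -/
theorem statement5 (σ χ ξ φ : ℝ) (hχ : 0 < χ) (hχσ : χ < σ) (hφ : 0 < φ) (hφξ : φ < ξ) :
    (∀ u v : ℝ, u ∈ Ioo (0:ℝ) 1 → v ∈ Ioo (0:ℝ) 1 →
      deriv (fun u' => Hfun σ χ ξ φ u' v) u * (u * (1 - u) * (σ * v - χ))
        + deriv (fun v' => Hfun σ χ ξ φ u v') v * (-(v * (1 - v) * (ξ * u - φ))) = 0) ∧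
    (∀ I : Set ℝ, I.OrdConnected → ∀ u v : ℝ → ℝ,
      (∀ t ∈ I, u t ∈ Ioo (0:ℝ) 1 ∧ v t ∈ Ioo (0:ℝ) 1) →
      (∀ t ∈ I, HasDerivAt u (u t * (1 - u t) * (σ * v t - χ)) t ∧
                HasDerivAt v (-(v t * (1 - v t) * (ξ * u t - φ))) t) →
      ∀ s ∈ I, ∀ t ∈ I, Hfun σ χ ξ φ (u s) (v s) = Hfun σ χ ξ φ (u t) (v t)) :=
  statement5_general σ χ ξ φ
end
end

section
/- The function H attains a strict global minimum on (0,1)² at the point S = (φ/ξ, χ/σ): for every (u,v) ∈ (0,1)² with (u,v) ≠ S one has H(u,v) > H(S). -/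
/-! `H(u,v)` splits into `ξ` times the cross entropy of `(u, 1-u)` relative to `(φ/ξ, 1-φ/ξ)` plus
`σ` times that of `(v, 1-v)` relative to `(χ/σ, 1-χ/σ)`. By Gibbs' inequality (here just
`log y ≤ y - 1`, strict for `y ≠ 1`) each cross entropy is minimal exactly where the two
distributions agree. -/

open Set

noncomputable section

open Real

theorem mul_log_add_one_sub_mul_log_one_sub_lt {s x : ℝ} (hs : s ∈ Ioo 0 1) (hx : x ∈ Ioo 0 1)
    (hxs : x ≠ s) :
    s * log x + (1 - s) * log (1 - x) < s * log s + (1 - s) * log (1 - s) := by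
  obtain ⟨hs0, hs1⟩ := hs
  obtain ⟨hx0, hx1⟩ := hx
  have hfirst : s * log (x / s) < x - s := by
    have h := log_lt_sub_one_of_pos (div_pos hx0 hs0) (by rwa [ne_eq, div_eq_one_iff_eq hs0.ne'])
    calc s * log (x / s) < s * (x / s - 1) := mul_lt_mul_of_pos_left h hs0
      _ = x - s := by field_simp
  have hsecond : (1 - s) * log ((1 - x) / (1 - s)) ≤ s - x := by
    have h := log_le_sub_one_of_pos (div_pos (sub_pos.2 hx1) (sub_pos.2 hs1))
    calc (1 - s) * log ((1 - x) / (1 - s)) ≤ (1 - s) * ((1 - x) / (1 - s) - 1) :=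
          mul_le_mul_of_nonneg_left h (sub_pos.2 hs1).le
      _ = s - x := by field_simp [(sub_pos.2 hs1).ne']; ring
  rw [log_div hx0.ne' hs0.ne'] at hfirst
  rw [log_div (sub_pos.2 hx1).ne' (sub_pos.2 hs1).ne'] at hsecond
  linarith

theorem neg_mul_log_add_sub_mul_log_one_sub_lt {a b x : ℝ} (ha : 0 < a) (hab : a < b)
    (hx : x ∈ Ioo 0 1) (hxab : x ≠ a / b) :
    -a * log (a / b) + (a - b) * log (1 - a / b) < -a * log x + (a - b) * log (1 - x) := by
  have hb : 0 < b := ha.trans hab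
  obtain ⟨s, rfl⟩ : ∃ s, a = b * s := ⟨a / b, by field_simp⟩
  rw [mul_div_cancel_left₀ s hb.ne'] at hxab ⊢
  have hs : s ∈ Ioo 0 1 := ⟨pos_of_mul_pos_right ha hb.le, by nlinarith⟩
  linear_combination b * mul_log_add_one_sub_mul_log_one_sub_lt hs hx hxab

theorem neg_mul_log_add_sub_mul_log_one_sub_le {a b x : ℝ} (ha : 0 < a) (hab : a < b)
    (hx : x ∈ Ioo 0 1) :
    -a * log (a / b) + (a - b) * log (1 - a / b) ≤ -a * log x + (a - b) * log (1 - x) := by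
  rcases eq_or_ne x (a / b) with rfl | hxab
  · rfl
  · exact (neg_mul_log_add_sub_mul_log_one_sub_lt ha hab hx hxab).le

/-- `H` attains a strict global minimum on `(0,1)²` at `S = (φ/ξ, χ/σ)`. -/
theorem statement6 (σ χ ξ φ : ℝ) (hχ : 0 < χ) (hχσ : χ < σ) (hφ : 0 < φ) (hφξ : φ < ξ) :
    ∀ u v : ℝ, u ∈ Ioo (0:ℝ) 1 → v ∈ Ioo (0:ℝ) 1 → (u, v) ≠ (φ / ξ, χ / σ) →
      Hfun σ χ ξ φ (φ / ξ) (χ / σ) < Hfun σ χ ξ φ u v := by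
  intro u v hu hv hne
  unfold Hfun
  rcases eq_or_ne u (φ / ξ) with rfl | hu'
  · have hv' : v ≠ χ / σ := fun h => hne (by rw [h])
    linarith [neg_mul_log_add_sub_mul_log_one_sub_lt hχ hχσ hv hv']
  · linarith [neg_mul_log_add_sub_mul_log_one_sub_lt hφ hφξ hu hu',
      neg_mul_log_add_sub_mul_log_one_sub_le hχ hχσ hv]
end
end

section
/- Let 0 < q < q̂ < 1 and assume p_ND > 0, 0 < ζ < η(q), 0 < ζ < η(q̂), 0 < θ(q) < κ(q), and 0 < θ(q̂) < κ(q̂). Then both coordinates of the interior equilibrium strictly increase when q_ND increases from q to q̂: θ(q)/κ(q) < θ(q̂)/κ(q̂) and ζ/η(q) < ζ/η(q̂). -/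
/-! Both coordinates are increasing in `q` for elementary reasons: `θ(q)/κ(q)` has the form
`s/(s + b)` with `b = q_D(p_D E − C_L) > 0` fixed and `s = θ(q)` increasing, while `η(q)` is
positive and decreasing in `q`. -/

theorem div_add_lt_div_add {α : Type*} [Field α] [LinearOrder α] [IsStrictOrderedRing α]
    {s t b : α} (hb : 0 < b) (hs : 0 ≤ s) (hst : s < t) : s / (s + b) < t / (t + b) := by
  rw [div_lt_div_iff₀ (by linarith) (by linarith)]
  linarith [mul_lt_mul_of_pos_right hst hb]

theorem statement11_general (E CL pD pND qD q qh ζ : ℝ)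
    (hE : 0 < E)
    (hpND : 0 < pND)
    (hqD : 0 < qD) (hqDq : qD < q) (hq : q < qh)
    (hζ : 0 < ζ) (hζηh : ζ < (pD * qD - pND * qh) * E)
    (hθ : 0 < q * (CL - pND * E))
    (hθκ : q * (CL - pND * E) < q * (CL - pND * E) + qD * (pD * E - CL)) :
    q * (CL - pND * E) / (q * (CL - pND * E) + qD * (pD * E - CL)) <
      qh * (CL - pND * E) / (qh * (CL - pND * E) + qD * (pD * E - CL)) ∧
    ζ / ((pD * qD - pND * q) * E) < ζ / ((pD * qD - pND * qh) * E) := by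
  have hgain : 0 < CL - pND * E := pos_of_mul_pos_right hθ (by linarith)
  have hb : 0 < qD * (pD * E - CL) := by linarith
  have hθ_lt : q * (CL - pND * E) < qh * (CL - pND * E) := by gcongr
  have hη_lt : (pD * qD - pND * qh) * E < (pD * qD - pND * q) * E := by gcongr
  exact ⟨div_add_lt_div_add hb hθ.le hθ_lt, div_lt_div_of_pos_left hζ (hζ.trans hζηh) hη_lt⟩

/-- In the negative defensive medicine model, an increase of `q_ND` from `q` to `q̂` strictly
increases both coordinates `(θ(q)/κ(q), ζ/η(q))` of the interior equilibrium, where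
`η(q) = (p_D q_D − p_ND q)E`, `θ(q) = q(C_L − p_ND E)`, `κ(q) = θ(q) + q_D(p_D E − C_L)`. -/
theorem statement11 (E CL pD pND qD q qh ζ : ℝ)
    (hE : 0 < E) (hCL : 0 < CL)
    (hpND : 0 < pND) (hpNDpD : pND ≤ pD) (hpD : pD ≤ 1)
    (hqD : 0 < qD) (hqDq : qD < q) (hq : q < qh) (hqh : qh < 1)
    (hζ : 0 < ζ) (hζη : ζ < (pD * qD - pND * q) * E) (hζηh : ζ < (pD * qD - pND * qh) * E)
    (hθ : 0 < q * (CL - pND * E))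
    (hθκ : q * (CL - pND * E) < q * (CL - pND * E) + qD * (pD * E - CL))
    (hθh : 0 < qh * (CL - pND * E))
    (hθκh : qh * (CL - pND * E) < qh * (CL - pND * E) + qD * (pD * E - CL)) :
    q * (CL - pND * E) / (q * (CL - pND * E) + qD * (pD * E - CL)) <
      qh * (CL - pND * E) / (qh * (CL - pND * E) + qD * (pD * E - CL)) ∧
    ζ / ((pD * qD - pND * q) * E) < ζ / ((pD * qD - pND * qh) * E) :=
  statement11_general E CL pD pND qD q qh ζ hE hpND hqD hqDq hq hζ hζηh hθ hθκ
end

section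
/- The function H is a first integral of system (B) on (0,K_x)×(0,K_y): for every (x,y) ∈ (0,K_x)×(0,K_y) one has ∂_x H(x,y) · r_x x(1 − x/K_x)(α − βy) + ∂_y H(x,y) · r_y y(1 − y/K_y)(−γ + δx) = 0; consequently, for every differentiable curve t ↦ (x(t), y(t)) with values in (0,K_x)×(0,K_y) that solves (B) on an interval I, the function t ↦ H(x(t), y(t)) is constant on I. -/
/-!
`H` separates variables, and multiplying the derivative of each summand by the logistic factor
of its own equation gives `(δx − γ)/r_x` resp. `(βy − α)/r_y`. Hence the derivative of `H` along
the field is `(δx − γ)(α − βy) + (βy − α)(δx − γ) = 0`, and a function with zero derivative on an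
interval is constant by the mean value theorem.
-/

open Set

noncomputable section

/-- The first integral
`H(x,y) = (1/r_y)(−α log y + (α − βKy) log(Ky − y)) + (1/r_x)(−γ log x + (γ − δKx) log(Kx − x))`. -/
def HPP (rx ry Kx Ky α β γ δ : ℝ) (x y : ℝ) : ℝ :=
  (1 / ry) * (-α * Real.log y + (α - β * Ky) * Real.log (Ky - y))
  + (1 / rx) * (-γ * Real.log x + (γ - δ * Kx) * Real.log (Kx - x))

theorem Set.OrdConnected.eq_of_hasDerivAt_eq_zero {G : Type*} [NormedAddCommGroup G]
    [NormedSpace ℝ G] {I : Set ℝ} (hI : I.OrdConnected) {f : ℝ → G}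
    (hf : ∀ t ∈ I, HasDerivAt f 0 t) {s t : ℝ} (hs : s ∈ I) (ht : t ∈ I) : f s = f t := by
  have h := hI.convex.norm_image_sub_le_of_norm_hasDerivWithin_le (f' := fun _ => 0) (C := 0)
    (fun u hu => (hf u hu).hasDerivWithinAt) (fun _ _ => by simp) ht hs
  rwa [zero_mul, norm_le_zero_iff, sub_eq_zero] at h

/-- The one-variable summand of `HPP`: `HPP … x y = (1/ry) * logisticPotential α β Ky y +
(1/rx) * logisticPotential γ δ Kx x`. -/
def logisticPotential (c d K v : ℝ) : ℝ :=
  -c * Real.log v + (c - d * K) * Real.log (K - v)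

theorem hasDerivAt_logisticPotential (c d : ℝ) {K u : ℝ} (hu : u ≠ 0) (huK : u ≠ K) :
    HasDerivAt (logisticPotential c d K) (-c / u - (c - d * K) / (K - u)) u := by
  have hlog_sub : HasDerivAt (fun v => Real.log (K - v)) (-1 / (K - u)) u := by
    simpa using ((hasDerivAt_id u).const_sub K).log (sub_ne_zero.2 huK.symm)
  refine (((Real.hasDerivAt_log hu).const_mul (-c)).add
    (hlog_sub.const_mul (c - d * K))).congr_deriv ?_
  ring

theorem logisticPotential_deriv_mul_logistic (c d : ℝ) {K u : ℝ} (hu : u ≠ 0) (huK : u ≠ K)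
    (hK : K ≠ 0) :
    (-c / u - (c - d * K) / (K - u)) * (u * (1 - u / K)) = d * u - c := by
  have hKu : K - u ≠ 0 := sub_ne_zero.2 huK.symm
  field_simp
  ring

theorem HPP_partials_mul_field_eq_zero {rx ry Kx Ky : ℝ} (α β γ δ : ℝ) (hrx : rx ≠ 0)
    (hry : ry ≠ 0) {x y : ℝ} (hx : x ∈ Ioo 0 Kx) (hy : y ∈ Ioo 0 Ky) :
    1 / rx * (-γ / x - (γ - δ * Kx) / (Kx - x)) * (rx * x * (1 - x / Kx) * (α - β * y))
      + 1 / ry * (-α / y - (α - β * Ky) / (Ky - y)) * (ry * y * (1 - y / Ky) * (-γ + δ * x))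
      = 0 := by
  have hpx := logisticPotential_deriv_mul_logistic γ δ hx.1.ne' hx.2.ne (hx.1.trans hx.2).ne'
  have hpy := logisticPotential_deriv_mul_logistic α β hy.1.ne' hy.2.ne (hy.1.trans hy.2).ne'
  calc _ = (-γ / x - (γ - δ * Kx) / (Kx - x)) * (x * (1 - x / Kx)) * (α - β * y)
          + (-α / y - (α - β * Ky) / (Ky - y)) * (y * (1 - y / Ky)) * (-γ + δ * x) := by
        field_simp
    _ = (δ * x - γ) * (α - β * y) + (β * y - α) * (-γ + δ * x) := by rw [hpx, hpy]
    _ = 0 := by ring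

theorem hasDerivAt_HPP_along_solution {rx ry Kx Ky α β γ δ : ℝ} (hrx : rx ≠ 0) (hry : ry ≠ 0)
    {x y : ℝ → ℝ} {t : ℝ} (hx : x t ∈ Ioo 0 Kx) (hy : y t ∈ Ioo 0 Ky)
    (hx' : HasDerivAt x (rx * x t * (1 - x t / Kx) * (α - β * y t)) t)
    (hy' : HasDerivAt y (ry * y t * (1 - y t / Ky) * (-γ + δ * x t)) t) :
    HasDerivAt (fun s => HPP rx ry Kx Ky α β γ δ (x s) (y s)) 0 t := by
  have hPx := (hasDerivAt_logisticPotential γ δ hx.1.ne' hx.2.ne).comp t hx'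
  have hPy := (hasDerivAt_logisticPotential α β hy.1.ne' hy.2.ne).comp t hy'
  refine ((hPy.const_mul (1 / ry)).add (hPx.const_mul (1 / rx))).congr_deriv ?_
  rw [← HPP_partials_mul_field_eq_zero α β γ δ hrx hry hx hy]
  ring

theorem statement16_general (rx ry Kx Ky α β γ δ : ℝ)
    (hrx : 0 < rx) (hry : 0 < ry) :
    (∀ x y : ℝ, x ∈ Ioo (0:ℝ) Kx → y ∈ Ioo (0:ℝ) Ky →
      deriv (fun x' => HPP rx ry Kx Ky α β γ δ x' y) x
          * (rx * x * (1 - x / Kx) * (α - β * y))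
        + deriv (fun y' => HPP rx ry Kx Ky α β γ δ x y') y
          * (ry * y * (1 - y / Ky) * (-γ + δ * x)) = 0) ∧
    (∀ I : Set ℝ, I.OrdConnected → ∀ x y : ℝ → ℝ,
      (∀ t ∈ I, x t ∈ Ioo (0:ℝ) Kx ∧ y t ∈ Ioo (0:ℝ) Ky) →
      (∀ t ∈ I, HasDerivAt x (rx * x t * (1 - x t / Kx) * (α - β * y t)) t ∧
                HasDerivAt y (ry * y t * (1 - y t / Ky) * (-γ + δ * x t)) t) →
      ∀ s ∈ I, ∀ t ∈ I,
        HPP rx ry Kx Ky α β γ δ (x s) (y s) = HPP rx ry Kx Ky α β γ δ (x t) (y t)) := by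
  refine ⟨fun x y hx hy => ?_, fun I hI x y hmem hode s hs t ht => ?_⟩
  · have hHx : HasDerivAt (fun x' => HPP rx ry Kx Ky α β γ δ x' y)
        (1 / rx * (-γ / x - (γ - δ * Kx) / (Kx - x))) x :=
      ((hasDerivAt_logisticPotential γ δ hx.1.ne' hx.2.ne).const_mul _).const_add _
    have hHy : HasDerivAt (fun y' => HPP rx ry Kx Ky α β γ δ x y')
        (1 / ry * (-α / y - (α - β * Ky) / (Ky - y))) y :=
      ((hasDerivAt_logisticPotential α β hy.1.ne' hy.2.ne).const_mul _).add_const _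
    rw [hHx.deriv, hHy.deriv]
    exact HPP_partials_mul_field_eq_zero α β γ δ hrx.ne' hry.ne' hx hy
  · exact hI.eq_of_hasDerivAt_eq_zero (fun u hu => hasDerivAt_HPP_along_solution hrx.ne' hry.ne'
      (hmem u hu).1 (hmem u hu).2 (hode u hu).1 (hode u hu).2) hs ht

/-- `H` is a first integral of the predator-prey system (B) on `(0,Kx) × (0,Ky)`: the gradient
of `H` is orthogonal to the vector field, and `H` is constant along every solution of (B) with
values in `(0,Kx) × (0,Ky)` defined on an interval. -/
theorem statement16 (rx ry Kx Ky α β γ δ : ℝ)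
    (hrx : 0 < rx) (hry : 0 < ry) (hKx : 0 < Kx) (hKy : 0 < Ky)
    (hα : 0 < α) (hβ : 0 < β) (hγ : 0 < γ) (hδ : 0 < δ) :
    (∀ x y : ℝ, x ∈ Ioo (0:ℝ) Kx → y ∈ Ioo (0:ℝ) Ky →
      deriv (fun x' => HPP rx ry Kx Ky α β γ δ x' y) x
          * (rx * x * (1 - x / Kx) * (α - β * y))
        + deriv (fun y' => HPP rx ry Kx Ky α β γ δ x y') y
          * (ry * y * (1 - y / Ky) * (-γ + δ * x)) = 0) ∧
    (∀ I : Set ℝ, I.OrdConnected → ∀ x y : ℝ → ℝ,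
      (∀ t ∈ I, x t ∈ Ioo (0:ℝ) Kx ∧ y t ∈ Ioo (0:ℝ) Ky) →
      (∀ t ∈ I, HasDerivAt x (rx * x t * (1 - x t / Kx) * (α - β * y t)) t ∧
                HasDerivAt y (ry * y t * (1 - y t / Ky) * (-γ + δ * x t)) t) →
      ∀ s ∈ I, ∀ t ∈ I,
        HPP rx ry Kx Ky α β γ δ (x s) (y s) = HPP rx ry Kx Ky α β γ δ (x t) (y t)) :=
  statement16_general rx ry Kx Ky α β γ δ hrx hry
end
end

section
/- If moreover γ < δK_x and α < βK_y, then H attains a strict global minimum on (0,K_x)×(0,K_y) at the point S := (γ/δ, α/β): for every (x,y) ∈ (0,K_x)×(0,K_y) with (x,y) ≠ S one has H(x,y) > H(S). -/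
/-! The separation of variables `H(x,y) = h_y(y)/r_y + h_x(x)/r_x` reduces the claim to one
variable. Writing `s = a/b`, the summand `h(t) = -a log t + (a - bK) log(K - t)` equals
`-b (s log t + (K - s) log(K - t))`, and `t ↦ s log t + (K - s) log(K - t)` has a strict
maximum on `(0, K)` at `t = s` by Gibbs' inequality `log u < u - 1` for `u ≠ 1`. -/

open Set

noncomputable section

open Real

def logisticTerm (a b K t : ℝ) : ℝ :=
  -a * log t + (a - b * K) * log (K - t)

lemma HPP_eq_logisticTerm (rx ry Kx Ky α β γ δ x y : ℝ) :
    HPP rx ry Kx Ky α β γ δ x y =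
      1 / ry * logisticTerm α β Ky y + 1 / rx * logisticTerm γ δ Kx x :=
  rfl

lemma mul_log_div_le_sub {s t : ℝ} (hs : 0 < s) (ht : 0 < t) : s * log (t / s) ≤ t - s := by
  calc s * log (t / s) ≤ s * (t / s - 1) :=
        mul_le_mul_of_nonneg_left (log_le_sub_one_of_pos (div_pos ht hs)) hs.le
    _ = t - s := by field_simp

lemma mul_log_div_lt_sub {s t : ℝ} (hs : 0 < s) (ht : 0 < t) (hts : t ≠ s) :
    s * log (t / s) < t - s := by
  have hts' : t / s ≠ 1 := by rwa [ne_eq, div_eq_one_iff_eq hs.ne']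
  calc s * log (t / s) < s * (t / s - 1) :=
        mul_lt_mul_of_pos_left (log_lt_sub_one_of_pos (div_pos ht hs) hts') hs
    _ = t - s := by field_simp

lemma mul_log_add_mul_log_sub_lt {s K t : ℝ} (hs : 0 < s) (hsK : s < K) (ht : 0 < t)
    (htK : t < K) (hts : t ≠ s) :
    s * log t + (K - s) * log (K - t) < s * log s + (K - s) * log (K - s) := by
  have hx := mul_log_div_lt_sub hs ht hts
  have hy := mul_log_div_le_sub (sub_pos.2 hsK) (sub_pos.2 htK)
  rw [log_div ht.ne' hs.ne'] at hx
  rw [log_div (sub_pos.2 htK).ne' (sub_pos.2 hsK).ne'] at hy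
  linarith

lemma logisticTerm_lt {a b K t : ℝ} (ha : 0 < a) (hb : 0 < b) (haK : a < b * K)
    (ht : t ∈ Ioo 0 K) (hts : t ≠ a / b) :
    logisticTerm a b K (a / b) < logisticTerm a b K t := by
  set s := a / b with hs_def
  have ha_eq : a = b * s := by rw [hs_def, mul_div_cancel₀ _ hb.ne']
  have hs : 0 < s := div_pos ha hb
  have hsK : s < K := by rw [hs_def, div_lt_iff₀ hb]; linarith
  have key := mul_log_add_mul_log_sub_lt hs hsK ht.1 ht.2 hts
  have hterm (u : ℝ) :
      logisticTerm a b K u = -b * (s * log u + (K - s) * log (K - u)) := by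
    rw [logisticTerm, ha_eq]; ring
  rw [hterm, hterm]
  exact mul_lt_mul_of_neg_left key (neg_neg_of_pos hb)

lemma logisticTerm_le {a b K t : ℝ} (ha : 0 < a) (hb : 0 < b) (haK : a < b * K)
    (ht : t ∈ Ioo 0 K) :
    logisticTerm a b K (a / b) ≤ logisticTerm a b K t := by
  rcases eq_or_ne t (a / b) with rfl | hts
  · exact le_rfl
  · exact (logisticTerm_lt ha hb haK ht hts).le

theorem statement17_general (rx ry Kx Ky α β γ δ : ℝ)
    (hrx : 0 < rx) (hry : 0 < ry)
    (hα : 0 < α) (hβ : 0 < β) (hγ : 0 < γ) (hδ : 0 < δ)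
    (hγKx : γ < δ * Kx) (hαKy : α < β * Ky) :
    ∀ x y : ℝ, x ∈ Ioo (0:ℝ) Kx → y ∈ Ioo (0:ℝ) Ky → (x, y) ≠ ((γ / δ, α / β) : ℝ × ℝ) →
      HPP rx ry Kx Ky α β γ δ (γ / δ) (α / β) < HPP rx ry Kx Ky α β γ δ x y := by
  intro x y hx hy hne
  rw [HPP_eq_logisticTerm, HPP_eq_logisticTerm]
  have hrx' : 0 < 1 / rx := one_div_pos.2 hrx
  have hry' : 0 < 1 / ry := one_div_pos.2 hry
  rcases eq_or_ne x (γ / δ) with rfl | hxS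
  · have hyS : y ≠ α / β := fun hyS => hne (by rw [hyS])
    exact add_lt_add_of_lt_of_le
      (mul_lt_mul_of_pos_left (logisticTerm_lt hα hβ hαKy hy hyS) hry') le_rfl
  · exact add_lt_add_of_le_of_lt
      (mul_le_mul_of_nonneg_left (logisticTerm_le hα hβ hαKy hy) hry'.le)
      (mul_lt_mul_of_pos_left (logisticTerm_lt hγ hδ hγKx hx hxS) hrx')

/-- If `γ < δKx` and `α < βKy`, then `H` attains a strict global minimum on `(0,Kx) × (0,Ky)`
at `S = (γ/δ, α/β)`. -/
theorem statement17 (rx ry Kx Ky α β γ δ : ℝ)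
    (hrx : 0 < rx) (hry : 0 < ry) (hKx : 0 < Kx) (hKy : 0 < Ky)
    (hα : 0 < α) (hβ : 0 < β) (hγ : 0 < γ) (hδ : 0 < δ)
    (hγKx : γ < δ * Kx) (hαKy : α < β * Ky) :
    ∀ x y : ℝ, x ∈ Ioo (0:ℝ) Kx → y ∈ Ioo (0:ℝ) Ky → (x, y) ≠ ((γ / δ, α / β) : ℝ × ℝ) →
      HPP rx ry Kx Ky α β γ δ (γ / δ) (α / β) < HPP rx ry Kx Ky α β γ δ x y :=
  statement17_general rx ry Kx Ky α β γ δ hrx hry hα hβ hγ hδ hγKx hαKy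
end
end
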